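/- arXiv:0712.1754 — 6 statements merged into one kernel-verified Lean document; each statement's English description precedes it below -/
import Mathlib

section
/- For every integer n ≥ 3 there is a constant C > 0 such that for all x, y ∈ ℝⁿ with x ≠ 0 and y ≠ 0, (1 / H^{n−1}(∂B_{|x|}(0))) ∫_{∂B_{|x|}(0)} | |z|² − |y|² | / |z − y|² dH^{n−1}(z) ≤ C. -/
/-!
On the sphere `‖z‖ = r` we have `|‖z‖² - ‖y‖²| = |‖z‖ - ‖y‖| (‖z‖ + ‖y‖) ≤ ‖z - y‖ (r + ‖y‖)`, so
the kernel is at most `3` when `‖y‖ ≥ 2r` and at most `3r / ‖z - y‖` otherwise. A small cap of the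
unit sphere is the image of a ball of the tangent hyperplane under a `2`-Lipschitz graph map, so
caps of radius `ρ` on the sphere of radius `r` have `H^{n-1}`-measure `O(ρ^{n-1})`, uniformly in
`r`; by the layer-cake formula this gives `∫_{‖z‖ = r} ‖z - y‖⁻¹ = O(r^{n-2})` as soon as
`n - 1 > 1`. Dividing by `H^{n-1}(∂B_r) = r^{n-1} H^{n-1}(S^{n-1})`, where
`0 < H^{n-1}(S^{n-1}) < ∞`, bounds the average.
-/

open MeasureTheory Filter Metric Real Topology
open Set Module
open scoped ENNReal NNReal RealInnerProductSpace Pointwise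

lemma abs_norm_sq_sub_norm_sq_div_le {F : Type*} [SeminormedAddCommGroup F] (z y : F) :
    |‖z‖ ^ 2 - ‖y‖ ^ 2| / ‖z - y‖ ^ 2 ≤ 3 + 3 * ‖z‖ * ‖z - y‖⁻¹ := by
  have hd : |‖z‖ - ‖y‖| ≤ ‖z - y‖ := abs_norm_sub_norm_le z y
  rcases (norm_nonneg (z - y)).eq_or_lt with h0 | hpos
  · rw [← h0]
    simp
  have hfactor : |‖z‖ ^ 2 - ‖y‖ ^ 2| = |‖z‖ - ‖y‖| * (‖z‖ + ‖y‖) := by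
    rw [sq_sub_sq, abs_mul, abs_of_nonneg (by positivity : 0 ≤ ‖z‖ + ‖y‖), mul_comm]
  rw [hfactor, div_le_iff₀ (by positivity), add_mul]
  rcases le_or_gt ‖y‖ (2 * ‖z‖) with hnear | hfar
  · calc |‖z‖ - ‖y‖| * (‖z‖ + ‖y‖) ≤ ‖z - y‖ * (3 * ‖z‖) :=
          mul_le_mul hd (by linarith) (by positivity) (norm_nonneg _)
      _ = 3 * ‖z‖ * ‖z - y‖⁻¹ * ‖z - y‖ ^ 2 := by field_simp
      _ ≤ _ := le_add_of_nonneg_left (by positivity)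
  · rw [abs_of_neg (by linarith [norm_nonneg z])] at hd ⊢
    nlinarith [norm_nonneg z, (by positivity : 0 ≤ 3 * ‖z‖ * ‖z - y‖⁻¹ * ‖z - y‖ ^ 2)]

lemma lintegral_Ioi_rpow_neg {d c : ℝ} (hd : 1 < d) (hc : 0 < c) :
    ∫⁻ t in Ioi c, ENNReal.ofReal (t ^ (-d)) = ENNReal.ofReal (c ^ (1 - d) / (d - 1)) := by
  rw [← ofReal_integral_eq_lintegral_ofReal (integrableOn_Ioi_rpow_of_lt (by linarith) hc)
    ((ae_restrict_mem measurableSet_Ioi).mono fun t ht => rpow_nonneg (hc.trans ht).le _),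
    integral_Ioi_rpow_of_lt (by linarith) hc]
  congr 1
  rw [show -d + 1 = -(d - 1) by ring, neg_div_neg_eq, neg_sub]

lemma lintegral_inv_dist_le {X : Type*} [PseudoMetricSpace X] [MeasurableSpace X]
    [OpensMeasurableSpace X] {μ : Measure X} {y : X} {A : ℝ≥0∞} {d R : ℝ} (hd : 1 < d)
    (hR : 0 < R) (huniv : μ univ ≤ A * ENNReal.ofReal (R ^ d))
    (hball : ∀ ρ, 0 < ρ → ρ < R → μ (closedBall y ρ) ≤ A * ENNReal.ofReal (ρ ^ d)) :
    ∫⁻ z, ENNReal.ofReal (dist z y)⁻¹ ∂μ ≤ A * ENNReal.ofReal (d / (d - 1) * R ^ (d - 1)) := by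
  have hR' : 0 < R⁻¹ := inv_pos.2 hR
  have hsuper : ∀ t ∈ Ioi R⁻¹, μ {z | t < (dist z y)⁻¹} ≤ A * ENNReal.ofReal (t ^ (-d)) := by
    intro t ht
    have ht0 : 0 < t := hR'.trans ht
    have hsub : {z | t < (dist z y)⁻¹} ⊆ closedBall y t⁻¹ := fun z hz => by
      have hpos : 0 < dist z y := inv_pos.1 (ht0.trans hz)
      exact (lt_inv_comm₀ ht0 hpos).1 hz |>.le
    calc μ {z | t < (dist z y)⁻¹} ≤ μ (closedBall y t⁻¹) := measure_mono hsub
      _ ≤ A * ENNReal.ofReal (t⁻¹ ^ d) := hball _ (inv_pos.2 ht0) (inv_lt_of_inv_lt₀ hR ht)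
      _ = A * ENNReal.ofReal (t ^ (-d)) := by rw [inv_rpow ht0.le, rpow_neg ht0.le]
  have hlow : ∫⁻ t in Ioc 0 R⁻¹, μ {z | t < (dist z y)⁻¹} ≤ A * ENNReal.ofReal (R ^ (d - 1)) :=
    calc ∫⁻ t in Ioc 0 R⁻¹, μ {z | t < (dist z y)⁻¹}
        ≤ ∫⁻ _ in Ioc 0 R⁻¹, A * ENNReal.ofReal (R ^ d) :=
          lintegral_mono fun t => (measure_mono (subset_univ _)).trans huniv
      _ = A * ENNReal.ofReal (R ^ (d - 1)) := by
          rw [setLIntegral_const, Real.volume_Ioc, sub_zero, mul_assoc,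
            ← ENNReal.ofReal_mul (by positivity), rpow_sub_one hR.ne', div_eq_mul_inv]
  have hhigh : ∫⁻ t in Ioi R⁻¹, μ {z | t < (dist z y)⁻¹} ≤
      A * ENNReal.ofReal (R ^ (d - 1) / (d - 1)) :=
    calc ∫⁻ t in Ioi R⁻¹, μ {z | t < (dist z y)⁻¹}
        ≤ ∫⁻ t in Ioi R⁻¹, A * ENNReal.ofReal (t ^ (-d)) :=
          setLIntegral_mono' measurableSet_Ioi hsuper
      _ = A * ENNReal.ofReal (R ^ (d - 1) / (d - 1)) := by
          rw [lintegral_const_mul _ (by fun_prop), lintegral_Ioi_rpow_neg hd hR', inv_rpow hR.le,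
            ← rpow_neg hR.le, neg_sub]
  rw [lintegral_eq_lintegral_meas_lt μ (f := fun z => (dist z y)⁻¹)
      (Eventually.of_forall fun z => by positivity)
      (continuous_id.dist continuous_const).measurable.inv.aemeasurable,
    ← Ioc_union_Ioi_eq_Ioi hR'.le, lintegral_union measurableSet_Ioi Ioc_disjoint_Ioi_same]
  calc _ ≤ A * ENNReal.ofReal (R ^ (d - 1)) + A * ENNReal.ofReal (R ^ (d - 1) / (d - 1)) :=
        add_le_add hlow hhigh
    _ = A * ENNReal.ofReal (d / (d - 1) * R ^ (d - 1)) := by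
        rw [← mul_add, ← ENNReal.ofReal_add (by positivity) (by positivity)]
        have : d - 1 ≠ 0 := by linarith
        congr 2
        field_simp
        ring

lemma hausdorffMeasure_smul_of_pos {F : Type*} [NormedAddCommGroup F] [NormedSpace ℝ F]
    [MeasurableSpace F] [BorelSpace F] (m : ℕ) {r : ℝ} (hr : 0 < r) (s : Set F) :
    μH[m] (r • s) = ENNReal.ofReal (r ^ m) * μH[m] s := by
  rw [Measure.hausdorffMeasure_smul₀ (Nat.cast_nonneg _) hr.ne', ENNReal.smul_def, smul_eq_mul,
    ENNReal.coe_rpow_of_nonneg _ (Nat.cast_nonneg _), ENNReal.rpow_natCast,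
    show (‖r‖₊ : ℝ≥0∞) = ENNReal.ofReal r from Real.enorm_eq_ofReal hr.le,
    ENNReal.ofReal_pow hr.le]

lemma hausdorffMeasure_closedBall_of_finrank_eq {V : Type*} [NormedAddCommGroup V]
    [InnerProductSpace ℝ V] [FiniteDimensional ℝ V] [MeasurableSpace V] [BorelSpace V] {m : ℕ}
    (hV : finrank ℝ V = m) (x : V) {t : ℝ} (ht : 0 ≤ t) :
    μH[m] (closedBall x t) =
      ENNReal.ofReal (t ^ m) * μH[m] (closedBall (0 : EuclideanSpace ℝ (Fin m)) 1) := by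
  subst hV
  let e := (stdOrthonormalBasis ℝ V).repr
  rw [← e.isometry.hausdorffMeasure_image (Or.inl (Nat.cast_nonneg _)),
    e.image_closedBall, Measure.addHaar_closedBall' _ _ ht, finrank_euclideanSpace_fin]

lemma abs_sqrt_one_sub_sq_sub_le {a b : ℝ} (ha : 0 ≤ a) (ha' : a ≤ 1 / 2) (hb : 0 ≤ b)
    (hb' : b ≤ 1 / 2) : |√(1 - a ^ 2) - √(1 - b ^ 2)| ≤ |a - b| := by
  have hx : √(1 - a ^ 2) ^ 2 = 1 - a ^ 2 := Real.sq_sqrt (by nlinarith)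
  have hy : √(1 - b ^ 2) ^ 2 = 1 - b ^ 2 := Real.sq_sqrt (by nlinarith)
  have hx2 : 1 / 2 ≤ √(1 - a ^ 2) := Real.le_sqrt_of_sq_le (by nlinarith)
  have hy2 : 1 / 2 ≤ √(1 - b ^ 2) := Real.le_sqrt_of_sq_le (by nlinarith)
  have hprod : (√(1 - a ^ 2) - √(1 - b ^ 2)) ^ 2 * (√(1 - a ^ 2) + √(1 - b ^ 2)) ^ 2 =
      (b - a) ^ 2 * (a + b) ^ 2 := by
    rw [← mul_pow, ← mul_pow]
    congr 1
    linear_combination hx - hy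
  have hsum : 1 ≤ (√(1 - a ^ 2) + √(1 - b ^ 2)) ^ 2 := by nlinarith
  have hab : (a + b) ^ 2 ≤ 1 := by nlinarith
  rw [← sq_le_sq]
  calc (√(1 - a ^ 2) - √(1 - b ^ 2)) ^ 2
      ≤ (√(1 - a ^ 2) - √(1 - b ^ 2)) ^ 2 * (√(1 - a ^ 2) + √(1 - b ^ 2)) ^ 2 :=
        le_mul_of_one_le_right (sq_nonneg _) hsum
    _ = (b - a) ^ 2 * (a + b) ^ 2 := hprod
    _ ≤ (a - b) ^ 2 := by nlinarith [sq_nonneg (a - b)]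

section Sphere

variable {E : Type*} [NormedAddCommGroup E] [InnerProductSpace ℝ E] {q : E}

lemma norm_smul_add_sq_of_mem_orthogonal (hq : ‖q‖ = 1) (a : ℝ) {u : E}
    (hu : u ∈ (ℝ ∙ q)ᗮ) : ‖a • q + u‖ ^ 2 = a ^ 2 + ‖u‖ ^ 2 := by
  have h : ⟪a • q, u⟫ = 0 :=
    Submodule.inner_right_of_mem_orthogonal
      (Submodule.smul_mem _ a (Submodule.mem_span_singleton_self q)) hu
  rw [sq, sq, sq, norm_add_sq_eq_norm_sq_add_norm_sq_real h, norm_smul, hq, Real.norm_eq_abs,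
    mul_one, abs_mul_abs_self]

noncomputable def sphereChart (q : E) (v : (ℝ ∙ q)ᗮ) : E := √(1 - ‖v‖ ^ 2) • q + v

lemma sphereChart_mem_sphere (hq : ‖q‖ = 1) {v : (ℝ ∙ q)ᗮ} (hv : ‖v‖ ≤ 1) :
    sphereChart q v ∈ sphere 0 1 := by
  have h := norm_smul_add_sq_of_mem_orthogonal hq (√(1 - ‖v‖ ^ 2)) v.2
  rw [Real.sq_sqrt (by nlinarith [norm_nonneg v]), Submodule.norm_coe, sub_add_cancel] at h
  rw [mem_sphere_zero_iff_norm]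
  exact (pow_left_inj₀ (norm_nonneg _) zero_le_one two_ne_zero).1 (h.trans (one_pow 2).symm)

lemma orthogonalProjectionOnto_sphereChart (q : E) (v : (ℝ ∙ q)ᗮ) :
    (ℝ ∙ q)ᗮ.orthogonalProjectionOnto (sphereChart q v) = v := by
  rw [sphereChart, map_add, map_smul,
    Submodule.orthogonalProjectionOnto_orthogonalComplement_singleton_eq_zero, smul_zero,
    zero_add, Submodule.orthogonalProjectionOnto_mem_subspace_eq_self]

lemma lipschitzOnWith_sphereChart (hq : ‖q‖ = 1) :
    LipschitzOnWith 2 (sphereChart q) (closedBall 0 (1 / 2)) := by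
  refine LipschitzOnWith.of_dist_le_mul fun v hv w hw => ?_
  rw [mem_closedBall_zero_iff] at hv hw
  have hsqrt := abs_sqrt_one_sub_sq_sub_le (norm_nonneg v) hv (norm_nonneg w) hw
  have hnorm : |‖v‖ - ‖w‖| ≤ ‖v - w‖ := abs_norm_sub_norm_le v w
  have hdist : dist (sphereChart q v) (sphereChart q w) ^ 2 =
      (√(1 - ‖v‖ ^ 2) - √(1 - ‖w‖ ^ 2)) ^ 2 + ‖v - w‖ ^ 2 := by
    rw [dist_eq_norm, ← Submodule.norm_coe (v - w),
      ← norm_smul_add_sq_of_mem_orthogonal hq _ (v - w).2]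
    simp only [sphereChart, sub_smul, Submodule.coe_sub]
    congr 2
    abel
  rw [NNReal.coe_ofNat, dist_eq_norm v w]
  refine le_of_sq_le_sq ?_ (by positivity)
  rw [hdist, ← sq_abs (√(1 - ‖v‖ ^ 2) - _)]
  nlinarith [abs_nonneg (√(1 - ‖v‖ ^ 2) - √(1 - ‖w‖ ^ 2)), abs_nonneg (‖v‖ - ‖w‖)]

lemma sphere_inter_closedBall_subset_image_sphereChart (hq : ‖q‖ = 1) {t : ℝ} (ht : t ≤ 1) :
    sphere 0 1 ∩ closedBall q t ⊆ sphereChart q '' closedBall 0 t := by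
  rintro z ⟨hz, hzq⟩
  rw [mem_sphere_zero_iff_norm] at hz
  rw [mem_closedBall, dist_eq_norm] at hzq
  set u := (ℝ ∙ q)ᗮ.orthogonalProjectionOnto z
  have hdecomp : z = ⟪q, z⟫ • q + u := by
    have := Submodule.starProjection_orthogonal_val (K := ℝ ∙ q) z
    rw [Submodule.starProjection_unit_singleton ℝ hq, Submodule.starProjection_apply] at this
    rw [this]
    abel
  have hu : ‖u‖ ≤ t := by
    have : u = (ℝ ∙ q)ᗮ.orthogonalProjectionOnto (z - q) := by
      rw [map_sub, Submodule.orthogonalProjectionOnto_orthogonalComplement_singleton_eq_zero,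
        sub_zero]
    exact this ▸ (Submodule.norm_orthogonalProjectionOnto_apply_le _ _).trans hzq
  have hpyth := norm_smul_add_sq_of_mem_orthogonal hq ⟪q, z⟫ u.2
  rw [← hdecomp, hz, Submodule.norm_coe] at hpyth
  have hinner : ‖z - q‖ ^ 2 = 2 - 2 * ⟪q, z⟫ := by
    rw [norm_sub_sq_real, hz, hq, real_inner_comm]
    ring
  have hnonneg : 0 ≤ ⟪q, z⟫ := by nlinarith [norm_nonneg (z - q)]
  refine ⟨u, mem_closedBall_zero_iff.2 hu, ?_⟩
  rw [sphereChart, show 1 - ‖u‖ ^ 2 = ⟪q, z⟫ ^ 2 by linarith, Real.sqrt_sq hnonneg, ← hdecomp]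

variable [MeasurableSpace E] [BorelSpace E] {m : ℕ}

lemma hausdorffMeasure_sphere {r : ℝ} (hr : 0 < r) :
    μH[m] (sphere (0 : E) r) = ENNReal.ofReal (r ^ m) * μH[m] (sphere (0 : E) 1) := by
  rw [← hausdorffMeasure_smul_of_pos m hr, smul_sphere' hr.ne', smul_zero,
    Real.norm_of_nonneg hr.le, mul_one]

variable [FiniteDimensional ℝ E] [Fact (finrank ℝ E = m + 1)]

lemma hausdorffMeasure_sphere_inter_closedBall_le_of_le_half (hq : ‖q‖ = 1) {t : ℝ}
    (ht0 : 0 ≤ t) (ht : t ≤ 1 / 2) :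
    μH[m] (sphere (0 : E) 1 ∩ closedBall q t) ≤
      2 ^ m * ENNReal.ofReal (t ^ m) * μH[m] (closedBall (0 : EuclideanSpace ℝ (Fin m)) 1) :=
  calc μH[m] (sphere (0 : E) 1 ∩ closedBall q t)
      ≤ μH[m] (sphereChart q '' closedBall 0 t) :=
        measure_mono (sphere_inter_closedBall_subset_image_sphereChart hq (by linarith))
    _ ≤ (2 : ℝ≥0) ^ (m : ℝ) * μH[m] (closedBall (0 : (ℝ ∙ q)ᗮ) t) :=
        ((lipschitzOnWith_sphereChart hq).mono
          (closedBall_subset_closedBall ht)).hausdorffMeasure_image_le (Nat.cast_nonneg _)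
    _ = _ := by
        rw [hausdorffMeasure_closedBall_of_finrank_eq (Submodule.finrank_orthogonal_span_singleton
          (ne_zero_of_norm_ne_zero (hq.trans_ne one_ne_zero))) 0 ht0, ENNReal.rpow_natCast,
          mul_assoc]
        norm_cast

lemma hausdorffMeasure_unitSphere_lt_top : μH[m] (sphere (0 : E) 1) < ⊤ := by
  obtain ⟨T, hTs, hT, hcover⟩ := finite_cover_balls_of_compact (isCompact_sphere (0 : E) 1)
    (by norm_num : (0 : ℝ) < 1 / 2)
  have hsub : sphere (0 : E) 1 ⊆ ⋃ q ∈ T, sphere 0 1 ∩ closedBall q (1 / 2) := fun z hz => by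
    obtain ⟨q, hq, hzq⟩ := mem_iUnion₂.1 (hcover hz)
    exact mem_iUnion₂.2 ⟨q, hq, hz, ball_subset_closedBall hzq⟩
  refine (measure_mono hsub).trans_lt (measure_biUnion_lt_top hT fun q hq => ?_)
  refine (hausdorffMeasure_sphere_inter_closedBall_le_of_le_half
    (mem_sphere_zero_iff_norm.1 (hTs hq)) (by norm_num) le_rfl).trans_lt ?_
  exact ENNReal.mul_lt_top (ENNReal.mul_lt_top (by simp) ENNReal.ofReal_lt_top)
    measure_closedBall_lt_top

lemma hausdorffMeasure_unitSphere_pos : 0 < μH[m] (sphere (0 : E) 1) := by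
  have : Nontrivial E := Module.nontrivial_of_finrank_eq_succ (Fact.out : finrank ℝ E = m + 1)
  obtain ⟨q, hq⟩ := exists_norm_eq E zero_le_one
  let K := (ℝ ∙ q)ᗮ
  have hball : closedBall (0 : K) 1 ⊆ K.orthogonalProjectionOnto '' sphere 0 1 := fun v hv =>
    ⟨sphereChart q v, sphereChart_mem_sphere hq (mem_closedBall_zero_iff.1 hv),
      orthogonalProjectionOnto_sphereChart q v⟩
  calc 0 < μH[m] (closedBall (0 : K) 1) := by
        rw [hausdorffMeasure_closedBall_of_finrank_eq (Submodule.finrank_orthogonal_span_singleton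
          (ne_zero_of_norm_ne_zero (hq.trans_ne one_ne_zero))) 0 zero_le_one]
        simpa using measure_closedBall_pos _ _ one_pos
    _ ≤ μH[m] (K.orthogonalProjectionOnto '' sphere 0 1) := measure_mono hball
    _ ≤ μH[m] (sphere (0 : E) 1) :=
        hausdorffMeasure_orthogonalProjectionOnto_le K _ _ (Nat.cast_nonneg _)

lemma toReal_hausdorffMeasure_unitSphere_pos : 0 < (μH[m] (sphere (0 : E) 1)).toReal :=
  ENNReal.toReal_pos hausdorffMeasure_unitSphere_pos.ne' hausdorffMeasure_unitSphere_lt_top.ne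

lemma exists_hausdorffMeasure_unitSphere_inter_closedBall_le :
    ∃ A : ℝ≥0∞, A ≠ ⊤ ∧ ∀ (w : E) (ρ : ℝ), 0 < ρ →
      μH[m] (sphere (0 : E) 1 ∩ closedBall w ρ) ≤ A * ENNReal.ofReal (ρ ^ m) := by
  set M := μH[m] (sphere (0 : E) 1)
  set β := μH[m] (closedBall (0 : EuclideanSpace ℝ (Fin m)) 1)
  refine ⟨4 ^ m * (M + β), ENNReal.mul_ne_top (by simp)
    (ENNReal.add_ne_top.2 ⟨hausdorffMeasure_unitSphere_lt_top.ne, measure_closedBall_lt_top.ne⟩),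
    fun w ρ hρ => ?_⟩
  have hscale (c : ℕ) : ENNReal.ofReal ((c * ρ) ^ m) = c ^ m * ENNReal.ofReal (ρ ^ m) := by
    rw [mul_pow, ENNReal.ofReal_mul (by positivity), ← Nat.cast_pow, ENNReal.ofReal_natCast,
      Nat.cast_pow]
  rcases le_or_gt (1 / 4) ρ with hρ4 | hρ4
  · calc μH[m] (sphere (0 : E) 1 ∩ closedBall w ρ) ≤ M := measure_mono inter_subset_left
      _ ≤ ENNReal.ofReal ((4 * ρ) ^ m) * M :=
          le_mul_of_one_le_left zero_le (ENNReal.one_le_ofReal.2 (one_le_pow₀ (by linarith)))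
      _ ≤ 4 ^ m * (M + β) * ENNReal.ofReal (ρ ^ m) := by
          rw [show (4 : ℝ) = (4 : ℕ) by norm_num, hscale, mul_right_comm]
          gcongr
          · norm_num
          · exact le_self_add
  · rcases (sphere (0 : E) 1 ∩ closedBall w ρ).eq_empty_or_nonempty with hemp | ⟨q, hq, hqw⟩
    · simp [hemp]
    have hsub : sphere (0 : E) 1 ∩ closedBall w ρ ⊆ sphere 0 1 ∩ closedBall q (2 * ρ) :=
      fun z ⟨hz, hzw⟩ => ⟨hz, by
        rw [mem_closedBall] at hzw hqw ⊢
        linarith [dist_triangle_right z q w]⟩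
    calc μH[m] (sphere (0 : E) 1 ∩ closedBall w ρ)
        ≤ 2 ^ m * ENNReal.ofReal ((2 * ρ) ^ m) * β :=
          (measure_mono hsub).trans (hausdorffMeasure_sphere_inter_closedBall_le_of_le_half
            (mem_sphere_zero_iff_norm.1 hq) (by positivity) (by linarith))
      _ ≤ 4 ^ m * (M + β) * ENNReal.ofReal (ρ ^ m) := by
          rw [show (2 : ℝ) = (2 : ℕ) by norm_num, hscale, ← mul_assoc, ← mul_pow, mul_right_comm]
          gcongr
          · norm_num
          · exact le_add_self

lemma exists_hausdorffMeasure_sphere_inter_closedBall_le :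
    ∃ A : ℝ≥0∞, A ≠ ⊤ ∧ ∀ r : ℝ, 0 < r → ∀ (w : E) (ρ : ℝ), 0 < ρ →
      μH[m] (sphere (0 : E) r ∩ closedBall w ρ) ≤ A * ENNReal.ofReal (ρ ^ m) := by
  obtain ⟨A, hA, hcap⟩ := exists_hausdorffMeasure_unitSphere_inter_closedBall_le (E := E) (m := m)
  refine ⟨A, hA, fun r hr w ρ hρ => ?_⟩
  have hscaled : sphere (0 : E) r ∩ closedBall w ρ =
      r • (sphere (0 : E) 1 ∩ closedBall (r⁻¹ • w) (ρ / r)) := by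
    rw [smul_set_inter₀ hr.ne', smul_sphere' hr.ne', smul_closedBall' hr.ne', smul_zero,
      smul_inv_smul₀ hr.ne', Real.norm_of_nonneg hr.le, mul_one, mul_div_cancel₀ _ hr.ne']
  calc μH[m] (sphere (0 : E) r ∩ closedBall w ρ)
      = ENNReal.ofReal (r ^ m) * μH[m] (sphere (0 : E) 1 ∩ closedBall (r⁻¹ • w) (ρ / r)) := by
        rw [hscaled, hausdorffMeasure_smul_of_pos m hr]
    _ ≤ ENNReal.ofReal (r ^ m) * (A * ENNReal.ofReal ((ρ / r) ^ m)) := by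
        gcongr
        exact hcap _ _ (div_pos hρ hr)
    _ = A * ENNReal.ofReal (ρ ^ m) := by
        rw [mul_left_comm, ← ENNReal.ofReal_mul (by positivity), ← mul_pow,
          mul_div_cancel₀ _ hr.ne']

lemma exists_integral_inv_norm_sub_sphere_le (hm : 2 ≤ m) :
    ∃ B : ℝ, 0 ≤ B ∧ ∀ r : ℝ, 0 < r → ∀ y : E,
      IntegrableOn (fun z => ‖z - y‖⁻¹) (sphere 0 r) μH[m] ∧
        ∫ z in sphere 0 r, ‖z - y‖⁻¹ ∂μH[m] ≤ B * r ^ ((m : ℝ) - 1) := by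
  obtain ⟨A, hA, hcap⟩ := exists_hausdorffMeasure_sphere_inter_closedBall_le (E := E) (m := m)
  set M := μH[m] (sphere (0 : E) 1)
  have hd : (1 : ℝ) < m := by exact_mod_cast hm
  refine ⟨(A + M).toReal * (m / (m - 1)), by have := hd.le; positivity, fun r hr y => ?_⟩
  have hlin : ∫⁻ z in sphere 0 r, ENNReal.ofReal ‖z - y‖⁻¹ ∂μH[m] ≤
      (A + M) * ENNReal.ofReal (m / (m - 1) * r ^ ((m : ℝ) - 1)) := by
    simp_rw [← dist_eq_norm]
    refine lintegral_inv_dist_le hd hr ?_ fun ρ hρ _ => ?_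
    · rw [Measure.restrict_apply_univ, hausdorffMeasure_sphere hr, rpow_natCast, mul_comm]
      gcongr
      exact le_add_self
    · rw [Measure.restrict_apply measurableSet_closedBall, inter_comm, rpow_natCast]
      exact (hcap r hr y ρ hρ).trans (by gcongr; exact le_self_add)
  have hfin : (A + M) * ENNReal.ofReal (m / (m - 1) * r ^ ((m : ℝ) - 1)) ≠ ⊤ :=
    ENNReal.mul_ne_top (ENNReal.add_ne_top.2 ⟨hA, hausdorffMeasure_unitSphere_lt_top.ne⟩)
      ENNReal.ofReal_ne_top
  have hnonneg : 0 ≤ᵐ[μH[m].restrict (sphere 0 r)] fun z : E => ‖z - y‖⁻¹ :=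
    Eventually.of_forall fun z => by positivity
  have hmeas : AEStronglyMeasurable (fun z : E => ‖z - y‖⁻¹) (μH[m].restrict (sphere 0 r)) :=
    ((continuous_id.sub continuous_const).norm.measurable.inv).aestronglyMeasurable
  refine ⟨⟨hmeas, (hasFiniteIntegral_iff_ofReal hnonneg).2 (hlin.trans_lt hfin.lt_top)⟩, ?_⟩
  rw [integral_eq_lintegral_of_nonneg_ae hnonneg hmeas]
  refine (ENNReal.toReal_mono hfin hlin).trans_eq ?_
  rw [ENNReal.toReal_mul, ENNReal.toReal_ofReal (by have := hd.le; positivity), mul_assoc]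

lemma exists_integral_sphere_kernel_le (hm : 2 ≤ m) :
    ∃ C : ℝ, 0 < C ∧ ∀ r : ℝ, 0 < r → ∀ y : E,
      ∫ z in sphere 0 r, |‖z‖ ^ 2 - ‖y‖ ^ 2| / ‖z - y‖ ^ 2 ∂μH[m] ≤ C * r ^ m := by
  obtain ⟨B, hB, hinv⟩ := exists_integral_inv_norm_sub_sphere_le (E := E) hm
  set M := (μH[m] (sphere (0 : E) 1)).toReal
  have hM : 0 < M := toReal_hausdorffMeasure_unitSphere_pos
  refine ⟨3 * (M + B), by positivity, fun r hr y => ?_⟩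
  obtain ⟨hint, hle⟩ := hinv r hr y
  have hS : μH[m] (sphere (0 : E) r) < ⊤ := by
    rw [hausdorffMeasure_sphere hr]
    exact ENNReal.mul_lt_top ENNReal.ofReal_lt_top hausdorffMeasure_unitSphere_lt_top
  have hSreal : (μH[m]).real (sphere (0 : E) r) = r ^ m * M := by
    rw [measureReal_def, hausdorffMeasure_sphere hr, ENNReal.toReal_mul,
      ENNReal.toReal_ofReal (by positivity)]
  have hpointwise : ∀ᵐ z ∂μH[m].restrict (sphere (0 : E) r),
      |‖z‖ ^ 2 - ‖y‖ ^ 2| / ‖z - y‖ ^ 2 ≤ 3 + 3 * r * ‖z - y‖⁻¹ := by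
    filter_upwards [ae_restrict_mem isClosed_sphere.measurableSet] with z hz
    rw [← mem_sphere_zero_iff_norm.1 hz]
    exact abs_norm_sq_sub_norm_sq_div_le z y
  have hconst : IntegrableOn (fun _ => (3 : ℝ)) (sphere (0 : E) r) μH[m] :=
    integrableOn_const (hs := hS.ne)
  calc ∫ z in sphere 0 r, |‖z‖ ^ 2 - ‖y‖ ^ 2| / ‖z - y‖ ^ 2 ∂μH[m]
      ≤ ∫ z in sphere 0 r, (3 + 3 * r * ‖z - y‖⁻¹) ∂μH[m] :=
        integral_mono_of_nonneg (Eventually.of_forall fun z => by positivity)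
          (Integrable.add hconst (hint.const_mul _)) hpointwise
    _ = 3 * (r ^ m * M) + 3 * r * ∫ z in sphere 0 r, ‖z - y‖⁻¹ ∂μH[m] := by
        rw [integral_add hconst (hint.const_mul _), setIntegral_const,
          hSreal, integral_const_mul, smul_eq_mul, mul_comm]
    _ ≤ 3 * (r ^ m * M) + 3 * r * (B * r ^ ((m : ℝ) - 1)) := by gcongr
    _ = 3 * (M + B) * r ^ m := by
        rw [rpow_sub_one hr.ne', rpow_natCast]
        field_simp

end Sphere

/-- Proposition 2.1 (i): for every `n ≥ 3` the spherical averages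
`⨍_{∂B_{|x|}(0)} ||z|² − |y|²| / |z − y|² dH^{n−1}(z)` are bounded uniformly in
`x ≠ 0` and `y ≠ 0`. -/
theorem sphere_average_kernel_bound
    (n : ℕ) (hn : 3 ≤ n) :
    ∃ C : ℝ, 0 < C ∧ ∀ x y : EuclideanSpace ℝ (Fin n), x ≠ 0 → y ≠ 0 →
      (μH[(n : ℝ) - 1] (Metric.sphere (0 : EuclideanSpace ℝ (Fin n)) ‖x‖)).toReal⁻¹ *
        ∫ z in Metric.sphere (0 : EuclideanSpace ℝ (Fin n)) ‖x‖,
          |‖z‖ ^ 2 - ‖y‖ ^ 2| / ‖z - y‖ ^ 2 ∂μH[(n : ℝ) - 1] ≤ C := by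
  obtain ⟨m, rfl⟩ : ∃ m, n = m + 1 := ⟨n - 1, by omega⟩
  have : Fact (finrank ℝ (EuclideanSpace ℝ (Fin (m + 1))) = m + 1) :=
    ⟨finrank_euclideanSpace_fin⟩
  obtain ⟨C, hC, hkernel⟩ :=
    exists_integral_sphere_kernel_le (E := EuclideanSpace ℝ (Fin (m + 1))) (m := m) (by omega)
  set M := (μH[m] (sphere (0 : EuclideanSpace ℝ (Fin (m + 1))) 1)).toReal
  have hM : 0 < M := toReal_hausdorffMeasure_unitSphere_pos
  refine ⟨C / M, by positivity, fun x y hx _ => ?_⟩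
  have hr : 0 < ‖x‖ := norm_pos_iff.2 hx
  rw [show ((m + 1 : ℕ) : ℝ) - 1 = m by push_cast; ring, hausdorffMeasure_sphere hr,
    ENNReal.toReal_mul, ENNReal.toReal_ofReal (by positivity)]
  calc (‖x‖ ^ m * M)⁻¹ * ∫ z in sphere 0 ‖x‖, |‖z‖ ^ 2 - ‖y‖ ^ 2| / ‖z - y‖ ^ 2 ∂μH[m]
      ≤ (‖x‖ ^ m * M)⁻¹ * (C * ‖x‖ ^ m) := by gcongr; exact hkernel _ hr y
    _ = C / M := by field_simp
end

section
/- For every integer n ≥ 4 there is a constant C > 0 such that for all x, y ∈ ℝⁿ with x ≠ 0 and y ≠ 0, (|x|² + |y|²) · (1 / H^{n−1}(∂B_{|x|}(0))) ∫_{∂B_{|x|}(0)} |z − y|^{−2} dH^{n−1}(z) ≤ C. -/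
/-!
Put `n = m + 1`, `r = ‖x‖`, and let `σ` be `μH[m]` restricted to the sphere `S_r ⊂ ℝ^(m+1)`.
Every point of `S_r` has a coordinate with `|w i| ≥ r / √(m+1)`, so `S_r` is covered by
`3(m+1)` graphs over coordinate hyperplanes that are `√(m+2)`-Lipschitz uniformly in `r`; this
gives `σ (closedBall v s) ≤ K s^m`. Projecting `S_r` onto a hyperplane gives `σ S_r ≥ c r^m`.
Splitting `|z - y|⁻²` dyadically at the radii `r / 2^k`, the kernel grows like `4^k` while the
measure of the `k`-th ball decays like `2^(-k m)`; since `m ≥ 3` the series converges and the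
average of the kernel over `S_r` is `O(r⁻²)`. If instead `‖y‖ ≥ 2r`, the kernel is at most
`4 / ‖y‖²` on `S_r`. In both cases `(r² + ‖y‖²)` times the average is bounded.
-/

open MeasureTheory Metric Real
open scoped NNReal ENNReal

theorem Real.four_mul_sq_sqrt_sub_sqrt_le {a b ε : ℝ} (hε : 0 < ε) (ha : ε ≤ a) (hb : ε ≤ b) :
    4 * ε * (√a - √b) ^ 2 ≤ (a - b) ^ 2 := by
  have hsa : √ε ≤ √a := Real.sqrt_le_sqrt ha
  have hsb : √ε ≤ √b := Real.sqrt_le_sqrt hb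
  have hsum : 4 * ε ≤ (√a + √b) ^ 2 := by
    nlinarith [Real.sq_sqrt hε.le, Real.sqrt_nonneg ε]
  have hdiff : a - b = (√a - √b) * (√a + √b) := by
    nlinarith [Real.sq_sqrt (hε.le.trans ha), Real.sq_sqrt (hε.le.trans hb)]
  rw [hdiff, mul_pow, mul_comm]
  exact mul_le_mul_of_nonneg_left hsum (sq_nonneg _)

section InverseSquareKernel

variable {X : Type*} [PseudoMetricSpace X]

theorem ofReal_inv_dist_sq_le_tsum_indicator (v w : X) {ρ : ℝ} (hρ : 0 < ρ) :
    ENNReal.ofReal ((dist w v ^ 2)⁻¹) ≤ ENNReal.ofReal (4 / ρ ^ 2) +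
      ∑' k : ℕ, (closedBall v (ρ / 2 ^ k)).indicator
        (fun _ => ENNReal.ofReal (4 ^ (k + 1) / ρ ^ 2)) w := by
  rcases (dist_nonneg (x := w) (y := v)).eq_or_lt with h0 | hpos
  · simp [← h0] -- junk value: `(0 ^ 2)⁻¹ = 0`
  rcases lt_or_ge ρ (dist w v) with hfar | hnear
  · refine le_add_right (ENNReal.ofReal_le_ofReal ?_)
    rw [← one_div, div_le_div_iff₀ (by positivity) (by positivity)]
    nlinarith
  obtain ⟨n, hn, hn'⟩ := exists_nat_pow_near ((one_le_div hpos).2 hnear) one_lt_two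
  have hmem : w ∈ closedBall v (ρ / 2 ^ n) := by
    rw [mem_closedBall, le_div_iff₀ (by positivity)]
    rw [le_div_iff₀ hpos] at hn
    linarith
  refine le_add_left (le_trans ?_ (ENNReal.le_tsum n))
  rw [Set.indicator_of_mem hmem]
  refine ENNReal.ofReal_le_ofReal ?_
  rw [← one_div, div_le_div_iff₀ (by positivity) (by positivity), one_mul,
    show (4 : ℝ) ^ (n + 1) = (2 ^ (n + 1)) ^ 2 by rw [← pow_mul, mul_comm, pow_mul]; norm_num,
    ← mul_pow]
  rw [div_lt_iff₀ hpos] at hn'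
  exact pow_le_pow_left₀ hρ.le hn'.le 2

theorem four_pow_succ_div_sq_mul_div_two_pow_le {d k : ℕ} (hd : 3 ≤ d) {K ρ : ℝ} (hK : 0 ≤ K)
    (hρ : 0 < ρ) :
    4 ^ (k + 1) / ρ ^ 2 * (K * (ρ / 2 ^ k) ^ d) ≤ 8 * K * ρ ^ (d - 2) / 2 / 2 ^ k := by
  obtain ⟨e, rfl⟩ : ∃ e, d = e + 3 := ⟨d - 3, by omega⟩
  have h2k : (0 : ℝ) < 2 ^ k := by positivity
  calc 4 ^ (k + 1) / ρ ^ 2 * (K * (ρ / 2 ^ k) ^ (e + 3))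
      = 4 * K * ρ ^ (e + 1) / (2 ^ k) ^ (e + 1) := by
        rw [show (4 : ℝ) ^ (k + 1) = 4 * (2 ^ k) ^ 2 by rw [pow_succ', sq, ← mul_pow]; norm_num]
        generalize (2 : ℝ) ^ k = X at h2k ⊢
        rw [div_pow, eq_div_iff (by positivity)]
        field_simp
        ring
    _ ≤ 4 * K * ρ ^ (e + 1) / 2 ^ k :=
        div_le_div_of_nonneg_left (by positivity) h2k
          (le_self_pow₀ (one_le_pow₀ one_le_two) (Nat.succ_ne_zero e))
    _ = 8 * K * ρ ^ (e + 3 - 2) / 2 / 2 ^ k := by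
        rw [show e + 3 - 2 = e + 1 by omega]
        ring

variable [MeasurableSpace X]

theorem setAverage_inv_dist_sq_le_of_far (μ : Measure X) {s : Set X} (hμs : μ s ≠ ∞) {x y : X}
    {r : ℝ} (hr : 0 < r) (hs : s ⊆ closedBall x r) (hy : 2 * r ≤ dist y x) :
    ⨍ z in s, (dist z y ^ 2)⁻¹ ∂μ ≤ 4 / dist y x ^ 2 := by
  have hbound : ∀ z ∈ s, ‖(dist z y ^ 2)⁻¹‖ ≤ 4 / dist y x ^ 2 := by
    intro z hz
    have hzx := mem_closedBall.1 (hs hz)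
    have hD : 0 < dist y x := by linarith
    have hzy : dist y x / 2 ≤ dist z y := by
      linarith [dist_triangle y z x, dist_comm z y]
    rw [Real.norm_of_nonneg (by positivity), ← inv_div]
    refine inv_anti₀ (by positivity) ?_
    calc dist y x ^ 2 / 4 = (dist y x / 2) ^ 2 := by ring
      _ ≤ dist z y ^ 2 := pow_le_pow_left₀ (by positivity) hzy 2
  rw [setAverage_eq, smul_eq_mul]
  rcases (measureReal_nonneg (μ := μ) (s := s)).eq_or_lt with h0 | hpos
  · rw [← h0, inv_zero, zero_mul]; positivity
  rw [inv_mul_le_iff₀ hpos, mul_comm]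
  exact (Real.le_norm_self _).trans (norm_setIntegral_le_of_norm_le_const hμs.lt_top hbound)

variable [OpensMeasurableSpace X]

theorem lintegral_ofReal_inv_dist_sq_le (μ : Measure X) {d : ℕ} (hd : 3 ≤ d) {K : ℝ≥0} {v : X}
    {ρ : ℝ} (hρ : 0 < ρ) (hμ : ∀ s, 0 < s → μ (closedBall v s) ≤ K * ENNReal.ofReal s ^ d) :
    ∫⁻ w, ENNReal.ofReal ((dist w v ^ 2)⁻¹) ∂μ ≤
      ENNReal.ofReal (4 / ρ ^ 2) * μ Set.univ + ENNReal.ofReal (8 * K * ρ ^ (d - 2)) := by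
  calc ∫⁻ w, ENNReal.ofReal ((dist w v ^ 2)⁻¹) ∂μ
      ≤ ∫⁻ w, (ENNReal.ofReal (4 / ρ ^ 2) + ∑' k : ℕ, (closedBall v (ρ / 2 ^ k)).indicator
          (fun _ => ENNReal.ofReal (4 ^ (k + 1) / ρ ^ 2)) w) ∂μ :=
        lintegral_mono fun w => ofReal_inv_dist_sq_le_tsum_indicator v w hρ
    _ = ENNReal.ofReal (4 / ρ ^ 2) * μ Set.univ +
          ∑' k : ℕ, ENNReal.ofReal (4 ^ (k + 1) / ρ ^ 2) * μ (closedBall v (ρ / 2 ^ k)) := by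
        rw [lintegral_add_left measurable_const, lintegral_const,
          lintegral_tsum fun k =>
            (measurable_const.indicator measurableSet_closedBall).aemeasurable]
        simp_rw [lintegral_indicator_const measurableSet_closedBall]
    _ ≤ ENNReal.ofReal (4 / ρ ^ 2) * μ Set.univ +
          ∑' k : ℕ, ENNReal.ofReal (8 * K * ρ ^ (d - 2) / 2 / 2 ^ k) := by
        gcongr with k
        refine (mul_le_mul_right (hμ _ (by positivity)) _).trans ?_
        rw [← ENNReal.ofReal_coe_nnreal, ← ENNReal.ofReal_pow (by positivity),
          ← ENNReal.ofReal_mul (by positivity), ← ENNReal.ofReal_mul (by positivity)]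
        exact ENNReal.ofReal_le_ofReal (four_pow_succ_div_sq_mul_div_two_pow_le hd K.coe_nonneg hρ)
    _ = _ := by
        rw [← ENNReal.ofReal_tsum_of_nonneg (fun k => by positivity) (summable_geometric_two' _),
          tsum_geometric_two']

theorem integral_inv_dist_sq_le (μ : Measure X) [IsFiniteMeasure μ] {d : ℕ} (hd : 3 ≤ d)
    {K : ℝ≥0} {v : X} {ρ : ℝ} (hρ : 0 < ρ)
    (hμ : ∀ s, 0 < s → μ (closedBall v s) ≤ K * ENNReal.ofReal s ^ d) :
    ∫ w, (dist w v ^ 2)⁻¹ ∂μ ≤ 4 / ρ ^ 2 * μ.real Set.univ + 8 * K * ρ ^ (d - 2) := by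
  have hmeas : AEStronglyMeasurable (fun w => (dist w v ^ 2)⁻¹) μ :=
    ((continuous_id.dist continuous_const).pow 2).measurable.inv.aestronglyMeasurable
  rw [integral_eq_lintegral_of_nonneg_ae (ae_of_all _ fun w => by positivity) hmeas]
  refine ENNReal.toReal_le_of_le_ofReal (by positivity) ?_
  refine (lintegral_ofReal_inv_dist_sq_le μ hd hρ hμ).trans_eq ?_
  rw [ENNReal.ofReal_add (by positivity) (by positivity),
    ENNReal.ofReal_mul (show 0 ≤ 4 / ρ ^ 2 by positivity), measureReal_def,
    ENNReal.ofReal_toReal (measure_ne_top μ _)]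

end InverseSquareKernel

namespace EuclideanSpace

section Volume

variable {ι : Type*} [Fintype ι]

theorem volume_eq_volume_image_ofLp (A : Set (EuclideanSpace ℝ ι)) :
    volume A = volume (WithLp.ofLp '' A : Set (ι → ℝ)) := by
  rw [← (volume_preserving_symm_measurableEquiv_toLp ι).symm.measure_preimage_equiv]
  congr 1
  ext x
  exact ⟨fun hx => ⟨_, hx, rfl⟩, by rintro ⟨y, hy, rfl⟩; exact hy⟩

theorem volume_le_hausdorffMeasure (A : Set (EuclideanSpace ℝ ι)) :
    volume A ≤ μH[Fintype.card ι] A := by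
  have h := (PiLp.lipschitzWith_ofLp 2 fun _ : ι => ℝ).hausdorffMeasure_image_le
    (Nat.cast_nonneg (Fintype.card ι)) A
  rwa [hausdorffMeasure_pi_real, ENNReal.coe_one, ENNReal.one_rpow, one_mul,
    ← volume_eq_volume_image_ofLp] at h

theorem exists_hausdorffMeasure_le_mul_volume :
    ∃ C : ℝ≥0, ∀ A : Set (EuclideanSpace ℝ ι), μH[Fintype.card ι] A ≤ C * volume A := by
  refine ⟨((Fintype.card ι : ℝ≥0) ^ (1 / (2 : ℝ≥0∞)).toReal) ^ Fintype.card ι, fun A => ?_⟩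
  have h := (PiLp.antilipschitzWith_ofLp 2 fun _ : ι => ℝ).le_hausdorffMeasure_image
    (Nat.cast_nonneg (Fintype.card ι)) A
  rwa [hausdorffMeasure_pi_real, ← volume_eq_volume_image_ofLp, ENNReal.rpow_natCast,
    ← ENNReal.coe_pow] at h

theorem exists_hausdorffMeasure_closedBall_le :
    ∃ C : ℝ≥0, ∀ (x : EuclideanSpace ℝ ι) (s : ℝ), 0 ≤ s →
      μH[Fintype.card ι] (closedBall x s) ≤ C * ENNReal.ofReal s ^ Fintype.card ι := by
  obtain ⟨C, hC⟩ := exists_hausdorffMeasure_le_mul_volume (ι := ι)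
  have hball : volume (ball (0 : EuclideanSpace ℝ ι) 1) ≠ ∞ := measure_ball_lt_top.ne
  refine ⟨C * (volume (ball (0 : EuclideanSpace ℝ ι) 1)).toNNReal, fun x s hs => ?_⟩
  refine (hC _).trans_eq ?_
  rw [Measure.addHaar_closedBall _ _ hs, finrank_euclideanSpace, ENNReal.ofReal_pow hs,
    ENNReal.coe_mul, ENNReal.coe_toNNReal hball]
  ring

end Volume

variable {m : ℕ}

def insertCoord (i : Fin (m + 1)) (t : ℝ) (u : EuclideanSpace ℝ (Fin m)) :
    EuclideanSpace ℝ (Fin (m + 1)) :=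
  WithLp.toLp 2 (i.insertNth (α := fun _ => ℝ) t u.ofLp)

def removeCoord (i : Fin (m + 1)) (w : EuclideanSpace ℝ (Fin (m + 1))) :
    EuclideanSpace ℝ (Fin m) :=
  WithLp.toLp 2 (i.removeNth w.ofLp)

@[simp] theorem insertCoord_apply_self (i : Fin (m + 1)) (t : ℝ)
    (u : EuclideanSpace ℝ (Fin m)) : insertCoord i t u i = t := by
  simp [insertCoord]

@[simp] theorem removeCoord_apply (i : Fin (m + 1)) (w : EuclideanSpace ℝ (Fin (m + 1)))
    (k : Fin m) : removeCoord i w k = w (i.succAbove k) := rfl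

@[simp] theorem removeCoord_insertCoord (i : Fin (m + 1)) (t : ℝ)
    (u : EuclideanSpace ℝ (Fin m)) : removeCoord i (insertCoord i t u) = u := by
  ext k; simp [insertCoord]

theorem insertCoord_removeCoord (i : Fin (m + 1)) (w : EuclideanSpace ℝ (Fin (m + 1))) :
    insertCoord i (w i) (removeCoord i w) = w := by
  ext j; simp [insertCoord, removeCoord]

theorem removeCoord_sub (i : Fin (m + 1)) (w w' : EuclideanSpace ℝ (Fin (m + 1))) :
    removeCoord i (w - w') = removeCoord i w - removeCoord i w' := rfl

theorem norm_sq_eq_sq_add_norm_removeCoord_sq (i : Fin (m + 1))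
    (w : EuclideanSpace ℝ (Fin (m + 1))) : ‖w‖ ^ 2 = w i ^ 2 + ‖removeCoord i w‖ ^ 2 := by
  simp only [EuclideanSpace.norm_sq_eq, Real.norm_eq_abs, sq_abs, removeCoord_apply]
  exact Fin.sum_univ_succAbove _ i

theorem dist_sq_eq_sq_add_dist_removeCoord_sq (i : Fin (m + 1))
    (w w' : EuclideanSpace ℝ (Fin (m + 1))) :
    dist w w' ^ 2 = (w i - w' i) ^ 2 + dist (removeCoord i w) (removeCoord i w') ^ 2 := by
  simpa [dist_eq_norm, removeCoord_sub] using norm_sq_eq_sq_add_norm_removeCoord_sq i (w - w')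

theorem dist_removeCoord_le (i : Fin (m + 1)) (w w' : EuclideanSpace ℝ (Fin (m + 1))) :
    dist (removeCoord i w) (removeCoord i w') ≤ dist w w' := by
  refine (pow_le_pow_iff_left₀ dist_nonneg dist_nonneg two_ne_zero).1 ?_
  rw [dist_sq_eq_sq_add_dist_removeCoord_sq i w w']
  exact le_add_of_nonneg_left (sq_nonneg _)

theorem lipschitzWith_removeCoord (i : Fin (m + 1)) : LipschitzWith 1 (removeCoord (m := m) i) :=
  LipschitzWith.of_dist_le_mul fun w w' => by simpa using dist_removeCoord_le i w w'

-- Indexing by `SignType` lets `sign (w i)` select the chart through `w`; the chart with `σ = 0`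
-- is a harmless extra piece of the cover.
noncomputable def sphereChart (i : Fin (m + 1)) (σ : SignType) (r : ℝ)
    (u : EuclideanSpace ℝ (Fin m)) : EuclideanSpace ℝ (Fin (m + 1)) :=
  insertCoord i (σ * √(r ^ 2 - ‖u‖ ^ 2)) u

@[simp] theorem removeCoord_sphereChart (i : Fin (m + 1)) (σ : SignType) (r : ℝ)
    (u : EuclideanSpace ℝ (Fin m)) : removeCoord i (sphereChart i σ r u) = u :=
  removeCoord_insertCoord i _ u

theorem norm_sphereChart_one (i : Fin (m + 1)) {r : ℝ} {u : EuclideanSpace ℝ (Fin m)}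
    (hu : ‖u‖ ≤ r) : ‖sphereChart i 1 r u‖ = r := by
  have hr : 0 ≤ r := (norm_nonneg u).trans hu
  refine (pow_left_inj₀ (norm_nonneg _) hr two_ne_zero).1 ?_
  rw [norm_sq_eq_sq_add_norm_removeCoord_sq i, removeCoord_sphereChart, sphereChart,
    insertCoord_apply_self, SignType.coe_one, one_mul,
    Real.sq_sqrt (by nlinarith [norm_nonneg u])]
  ring

-- On this domain the height `√(r² - ‖u‖²)` stays above `r / √(m+1)`, where the square root is
-- Lipschitz; the bound does not depend on `r`.
theorem lipschitzOnWith_sphereChart (i : Fin (m + 1)) (σ : SignType) {r : ℝ} (hr : 0 < r) :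
    LipschitzOnWith (NNReal.sqrt (m + 2)) (sphereChart i σ r)
      {u | r ^ 2 / (m + 1) ≤ r ^ 2 - ‖u‖ ^ 2} := by
  rw [lipschitzOnWith_iff_dist_le_mul]
  intro u hu u' hu'
  simp only [Set.mem_ofPred_eq] at hu hu'
  have hε : 0 < r ^ 2 / (m + 1) := by positivity
  have hnorm {u : EuclideanSpace ℝ (Fin m)} (h : r ^ 2 / (m + 1) ≤ r ^ 2 - ‖u‖ ^ 2) : ‖u‖ ≤ r :=
    (pow_le_pow_iff_left₀ (norm_nonneg u) hr.le two_ne_zero).1 (by linarith)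
  have hσ : (σ : ℝ) ^ 2 ≤ 1 := by cases σ <;> norm_num
  have hsq_diff : (‖u‖ ^ 2 - ‖u'‖ ^ 2) ^ 2 ≤ (2 * r * dist u u') ^ 2 := by
    have h := abs_norm_sub_norm_le u u'
    rw [← dist_eq_norm] at h
    have habs : |‖u‖ ^ 2 - ‖u'‖ ^ 2| ≤ 2 * r * dist u u' := by
      rw [sq_sub_sq, abs_mul, abs_of_nonneg (by positivity)]
      exact mul_le_mul (by linarith [hnorm hu, hnorm hu']) h (abs_nonneg _) (by positivity)
    simpa only [sq_abs] using pow_le_pow_left₀ (abs_nonneg _) habs 2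
  have hsqrt := four_mul_sq_sqrt_sub_sqrt_le hε hu hu'
  have hchart : (√(r ^ 2 - ‖u‖ ^ 2) - √(r ^ 2 - ‖u'‖ ^ 2)) ^ 2 ≤ (m + 1) * dist u u' ^ 2 := by
    refine le_of_mul_le_mul_left ?_ hε
    calc r ^ 2 / (m + 1) * (√(r ^ 2 - ‖u‖ ^ 2) - √(r ^ 2 - ‖u'‖ ^ 2)) ^ 2
        ≤ (2 * r * dist u u') ^ 2 / 4 := by
          rw [show r ^ 2 - ‖u‖ ^ 2 - (r ^ 2 - ‖u'‖ ^ 2) = -(‖u‖ ^ 2 - ‖u'‖ ^ 2) by ring,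
            neg_sq] at hsqrt
          linarith
      _ = r ^ 2 / (m + 1) * ((m + 1) * dist u u' ^ 2) := by field_simp; ring
  refine (pow_le_pow_iff_left₀ dist_nonneg (by positivity) two_ne_zero).1 ?_
  rw [dist_sq_eq_sq_add_dist_removeCoord_sq i, removeCoord_sphereChart, removeCoord_sphereChart,
    sphereChart, sphereChart, insertCoord_apply_self, insertCoord_apply_self, ← mul_sub, mul_pow,
    mul_pow, Real.coe_sqrt, Real.sq_sqrt (by positivity)]
  push_cast
  nlinarith [sq_nonneg (√(r ^ 2 - ‖u‖ ^ 2) - √(r ^ 2 - ‖u'‖ ^ 2))]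

theorem exists_le_sq_apply_of_norm_eq {w : EuclideanSpace ℝ (Fin (m + 1))} {r : ℝ}
    (hw : ‖w‖ = r) : ∃ i, r ^ 2 / (m + 1) ≤ w i ^ 2 := by
  have hsum : ∑ _i : Fin (m + 1), r ^ 2 / (m + 1) = ∑ i, w i ^ 2 := by
    rw [Finset.sum_const, Finset.card_univ, Fintype.card_fin, nsmul_eq_mul, ← hw,
      EuclideanSpace.norm_sq_eq]
    push_cast
    field_simp
    simp only [Real.norm_eq_abs, sq_abs]
  obtain ⟨i, -, hi⟩ := Finset.exists_le_of_sum_le Finset.univ_nonempty hsum.le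
  exact ⟨i, hi⟩

theorem sphere_inter_closedBall_subset_iUnion_sphereChart (r : ℝ)
    (v : EuclideanSpace ℝ (Fin (m + 1))) (s : ℝ) :
    sphere 0 r ∩ closedBall v s ⊆ ⋃ p : Fin (m + 1) × SignType,
      sphereChart p.1 p.2 r ''
        ({u | r ^ 2 / (m + 1) ≤ r ^ 2 - ‖u‖ ^ 2} ∩ closedBall (removeCoord p.1 v) s) := by
  rintro w ⟨hw, hwv⟩
  rw [mem_sphere_zero_iff_norm] at hw
  obtain ⟨i, hi⟩ := exists_le_sq_apply_of_norm_eq hw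
  have hrem : r ^ 2 - ‖removeCoord i w‖ ^ 2 = w i ^ 2 := by
    rw [← hw, norm_sq_eq_sq_add_norm_removeCoord_sq i]; ring
  refine Set.mem_iUnion.2 ⟨(i, SignType.sign (w i)), removeCoord i w, ⟨?_, ?_⟩, ?_⟩
  · rwa [Set.mem_ofPred_eq, hrem]
  · exact (dist_removeCoord_le i w v).trans (mem_closedBall.1 hwv)
  · rw [sphereChart, hrem, Real.sqrt_sq_eq_abs, sign_mul_abs, insertCoord_removeCoord]

def SpheresUpperRegular (m : ℕ) (K : ℝ≥0) : Prop :=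
  ∀ r : ℝ, 0 < r → ∀ (v : EuclideanSpace ℝ (Fin (m + 1))) (s : ℝ), 0 ≤ s →
    μH[m] (sphere 0 r ∩ closedBall v s) ≤ K * ENNReal.ofReal s ^ m

theorem exists_spheresUpperRegular (m : ℕ) : ∃ K, SpheresUpperRegular m K := by
  obtain ⟨C, hC⟩ := exists_hausdorffMeasure_closedBall_le (ι := Fin m)
  simp only [Fintype.card_fin] at hC
  set L : ℝ≥0 := NNReal.sqrt (m + 2)
  refine ⟨Fintype.card (Fin (m + 1) × SignType) * (L ^ m * C), fun r hr v s hs => ?_⟩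
  have hchart (p : Fin (m + 1) × SignType) :
      μH[m] (sphereChart p.1 p.2 r ''
        ({u | r ^ 2 / (m + 1) ≤ r ^ 2 - ‖u‖ ^ 2} ∩ closedBall (removeCoord p.1 v) s))
        ≤ (L ^ m * C : ℝ≥0) * ENNReal.ofReal s ^ m := by
    refine (((lipschitzOnWith_sphereChart p.1 p.2 hr).mono
      Set.inter_subset_left).hausdorffMeasure_image_le (Nat.cast_nonneg m)).trans ?_
    rw [ENNReal.rpow_natCast, ENNReal.coe_mul, ENNReal.coe_pow, mul_assoc]
    gcongr
    exact (measure_mono Set.inter_subset_right).trans (hC _ s hs)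
  calc μH[m] (sphere 0 r ∩ closedBall v s)
      ≤ ∑ p : Fin (m + 1) × SignType, μH[m] (sphereChart p.1 p.2 r ''
          ({u | r ^ 2 / (m + 1) ≤ r ^ 2 - ‖u‖ ^ 2} ∩ closedBall (removeCoord p.1 v) s)) :=
        (measure_mono (sphere_inter_closedBall_subset_iUnion_sphereChart r v s)).trans
          (measure_iUnion_fintype_le _ _)
    _ ≤ ∑ _p : Fin (m + 1) × SignType, (L ^ m * C : ℝ≥0) * ENNReal.ofReal s ^ m :=
        Finset.sum_le_sum fun p _ => hchart p
    _ = _ := by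
        rw [Finset.sum_const, Finset.card_univ, nsmul_eq_mul]
        push_cast
        ring

theorem hausdorffMeasure_sphere_lt_top {r : ℝ} (hr : 0 < r) :
    μH[m] (sphere (0 : EuclideanSpace ℝ (Fin (m + 1))) r) < ∞ := by
  obtain ⟨K, hK⟩ := exists_spheresUpperRegular m
  have h := hK r hr 0 r hr.le
  rw [Set.inter_eq_self_of_subset_left sphere_subset_closedBall] at h
  exact h.trans_lt (by finiteness)

theorem volume_closedBall_le_hausdorffMeasure_sphere (r : ℝ) :
    volume (closedBall (0 : EuclideanSpace ℝ (Fin m)) r)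
      ≤ μH[m] (sphere (0 : EuclideanSpace ℝ (Fin (m + 1))) r) := by
  have hsub : closedBall (0 : EuclideanSpace ℝ (Fin m)) r ⊆ removeCoord 0 '' sphere 0 r := by
    intro u hu
    rw [mem_closedBall_zero_iff] at hu
    exact ⟨sphereChart 0 1 r u, mem_sphere_zero_iff_norm.2 (norm_sphereChart_one 0 hu),
      removeCoord_sphereChart 0 1 r u⟩
  calc volume (closedBall (0 : EuclideanSpace ℝ (Fin m)) r)
      ≤ μH[m] (closedBall (0 : EuclideanSpace ℝ (Fin m)) r) := by
        simpa using volume_le_hausdorffMeasure (closedBall (0 : EuclideanSpace ℝ (Fin m)) r)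
    _ ≤ μH[m] (removeCoord 0 '' sphere (0 : EuclideanSpace ℝ (Fin (m + 1))) r) :=
        measure_mono hsub
    _ ≤ μH[m] (sphere (0 : EuclideanSpace ℝ (Fin (m + 1))) r) := by
        simpa using (lipschitzWith_removeCoord 0).hausdorffMeasure_image_le (Nat.cast_nonneg m)
          (sphere (0 : EuclideanSpace ℝ (Fin (m + 1))) r)

end EuclideanSpace

theorem setAverage_sphere_inv_dist_sq_le {m : ℕ} (hm : 3 ≤ m) {K : ℝ≥0}
    (hK : EuclideanSpace.SpheresUpperRegular m K)
    {r : ℝ} (hr : 0 < r) (y : EuclideanSpace ℝ (Fin (m + 1))) :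
    ⨍ z in sphere 0 r, (dist z y ^ 2)⁻¹ ∂μH[m] ≤
      (4 + 8 * K / volume.real (ball (0 : EuclideanSpace ℝ (Fin m)) 1)) / r ^ 2 := by
  set S := sphere (0 : EuclideanSpace ℝ (Fin (m + 1))) r
  set c := volume.real (ball (0 : EuclideanSpace ℝ (Fin m)) 1)
  have hc : 0 < c :=
    ENNReal.toReal_pos (measure_ball_pos volume 0 one_pos).ne' measure_ball_lt_top.ne
  have hSfin : μH[m] S ≠ ∞ := (EuclideanSpace.hausdorffMeasure_sphere_lt_top hr).ne
  have hSlow : c * r ^ m ≤ μH[m].real S := by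
    have h := ENNReal.toReal_mono hSfin
      (EuclideanSpace.volume_closedBall_le_hausdorffMeasure_sphere r)
    rwa [← measureReal_def, ← measureReal_def, Measure.addHaar_real_closedBall _ _ hr.le,
      finrank_euclideanSpace_fin, mul_comm] at h
  have := isFiniteMeasure_restrict.2 hSfin
  have hint := integral_inv_dist_sq_le (μH[m].restrict S) hm hr (fun s hs => by
    rw [Measure.restrict_apply measurableSet_closedBall, Set.inter_comm]; exact hK r hr y s hs.le)
  rw [measureReal_restrict_apply_univ] at hint
  have hpos : 0 < μH[m].real S := lt_of_lt_of_le (by positivity) hSlow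
  rw [setAverage_eq, smul_eq_mul, inv_mul_le_iff₀ hpos]
  have hpow : r ^ (m - 2) ≤ μH[m].real S / (c * r ^ 2) := by
    rw [le_div_iff₀ (by positivity)]
    have hrm : r ^ m = r ^ (m - 2) * r ^ 2 := by rw [← pow_add, Nat.sub_add_cancel (by omega)]
    rw [hrm] at hSlow
    linarith
  calc ∫ z in S, (dist z y ^ 2)⁻¹ ∂μH[m]
      ≤ 4 / r ^ 2 * μH[m].real S + 8 * K * r ^ (m - 2) := hint
    _ ≤ 4 / r ^ 2 * μH[m].real S + 8 * K * (μH[m].real S / (c * r ^ 2)) := by gcongr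
    _ = μH[m].real S * ((4 + 8 * K / c) / r ^ 2) := by field_simp

theorem sq_add_sq_mul_setAverage_sphere_inv_dist_sq_le {m : ℕ} (hm : 3 ≤ m) {K : ℝ≥0}
    (hK : EuclideanSpace.SpheresUpperRegular m K)
    {r : ℝ} (hr : 0 < r) (y : EuclideanSpace ℝ (Fin (m + 1))) :
    (r ^ 2 + ‖y‖ ^ 2) * ⨍ z in sphere 0 r, (dist z y ^ 2)⁻¹ ∂μH[m] ≤
      5 * (4 + 8 * K / volume.real (ball (0 : EuclideanSpace ℝ (Fin m)) 1)) := by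
  set C := 4 + 8 * K / volume.real (ball (0 : EuclideanSpace ℝ (Fin m)) 1)
  rcases le_total ‖y‖ (2 * r) with hy | hy
  · calc (r ^ 2 + ‖y‖ ^ 2) * ⨍ z in sphere 0 r, (dist z y ^ 2)⁻¹ ∂μH[m]
        ≤ (r ^ 2 + ‖y‖ ^ 2) * (C / r ^ 2) :=
          mul_le_mul_of_nonneg_left (setAverage_sphere_inv_dist_sq_le hm hK hr y) (by positivity)
      _ ≤ 5 * C := by
          rw [mul_div_assoc', div_le_iff₀ (by positivity)]
          have : ‖y‖ ^ 2 ≤ 4 * r ^ 2 := by nlinarith [norm_nonneg y]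
          have : 0 ≤ C := by positivity
          nlinarith
  · have hy0 : 0 < ‖y‖ := by linarith
    have hfar := setAverage_inv_dist_sq_le_of_far μH[m]
      (EuclideanSpace.hausdorffMeasure_sphere_lt_top hr).ne hr sphere_subset_closedBall
      (y := y) (by rwa [dist_zero_right])
    rw [dist_zero_right] at hfar
    calc (r ^ 2 + ‖y‖ ^ 2) * ⨍ z in sphere 0 r, (dist z y ^ 2)⁻¹ ∂μH[m]
        ≤ (r ^ 2 + ‖y‖ ^ 2) * (4 / ‖y‖ ^ 2) := mul_le_mul_of_nonneg_left hfar (by positivity)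
      _ ≤ 5 := by
          rw [mul_div_assoc', div_le_iff₀ (by positivity)]
          nlinarith
      _ ≤ 5 * C := by
          have : 4 ≤ C := le_add_of_nonneg_right (by positivity)
          linarith

/-- Case 2 (n > 3) in the proof of Proposition 2.1 (i): for every `n ≥ 4` the quantity
`(|x|² + |y|²) ⨍_{∂B_{|x|}(0)} |z − y|⁻² dH^{n−1}(z)` is bounded uniformly in
`x ≠ 0`, `y ≠ 0` in `ℝⁿ`. -/
theorem sphere_average_kernel_bound_dim_ge4
    (n : ℕ) (hn : 4 ≤ n) :
    ∃ C : ℝ, 0 < C ∧ ∀ x y : EuclideanSpace ℝ (Fin n), x ≠ 0 → y ≠ 0 →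
      (‖x‖ ^ 2 + ‖y‖ ^ 2) *
        ((μH[(n : ℝ) - 1] (Metric.sphere (0 : EuclideanSpace ℝ (Fin n)) ‖x‖)).toReal⁻¹ *
          ∫ z in Metric.sphere (0 : EuclideanSpace ℝ (Fin n)) ‖x‖,
            (‖z - y‖ ^ 2)⁻¹ ∂μH[(n : ℝ) - 1]) ≤ C := by
  obtain ⟨m, rfl⟩ : ∃ m, n = m + 1 := ⟨n - 1, by omega⟩
  obtain ⟨K, hK⟩ := EuclideanSpace.exists_spheresUpperRegular m
  refine ⟨5 * (4 + 8 * K / volume.real (ball (0 : EuclideanSpace ℝ (Fin m)) 1)), by positivity,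
    fun x y hx _ => ?_⟩
  rw [show ((m + 1 : ℕ) : ℝ) - 1 = m by push_cast; ring, ← measureReal_def,
    ← smul_eq_mul (a := (μH[m].real _)⁻¹), ← setAverage_eq]
  simp_rw [← dist_eq_norm]
  exact sq_add_sq_mul_setAverage_sphere_inv_dist_sq_le (by omega) hK (norm_pos_iff.2 hx) y
end

section
/- Let n ≥ 4 be an integer. There is a constant C > 0, depending only on n, such that for every measurable radially symmetric function f : ℝⁿ → ℝ with ∫_{ℝⁿ} |f| dH^n < ∞ and every x ∈ ℝⁿ \ {0}, |x|² ∫_{ℝⁿ} |x − y|^{−2} |f(y)| dH^n(y) ≤ C ∫_{ℝⁿ} |f| dH^n. -/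
/-!
If `f` is radial, the mass `ν (closedBall x s)` of the measure `ν = |f| H^n` is the same for every
ball of radius `s` centred on the sphere of radius `‖x‖`. Averaging over the annulus of width `2s`
around that sphere (Tonelli) turns this into `ν (closedBall x s) ≤ (4s/‖x‖)^(n-1) ν(ℝⁿ)` for
`4s ≤ ‖x‖`. Splitting `‖x - y‖⁻²` into dyadic shells around `x`, the shell at scale `‖x‖/2^j`
contributes at most `4^j · 8^(-j)` times `‖x‖⁻² ν(ℝⁿ)`: since `n - 1 ≥ 3 > 2`, these form a
convergent geometric series.
-/

open MeasureTheory Metric Set Module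
open scoped ENNReal

theorem MeasureTheory.MeasurePreserving.withDensity_of_comp_eq {α : Type*} [MeasurableSpace α]
    {μ : Measure α} {e : α → α} (he : MeasurePreserving e μ μ) (hemb : MeasurableEmbedding e)
    {g : α → ℝ≥0∞} (hg : g ∘ e = g) :
    MeasurePreserving e (μ.withDensity g) (μ.withDensity g) := by
  refine ⟨he.measurable, Measure.ext fun s hs => ?_⟩
  rw [Measure.map_apply he.measurable hs, withDensity_apply _ (he.measurable hs),
    withDensity_apply _ hs]
  conv_lhs => rw [← hg]
  exact he.setLIntegral_comp_preimage_emb hemb g s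

theorem exists_norm_eq_dist_le {E : Type*} [NormedAddCommGroup E] [NormedSpace ℝ E] (x z : E) :
    ∃ z', ‖z'‖ = ‖x‖ ∧ dist z z' ≤ |‖z‖ - ‖x‖| := by
  rcases eq_or_ne z 0 with rfl | hz
  · exact ⟨x, rfl, by simp⟩
  refine ⟨(‖x‖ / ‖z‖) • z, by simp [norm_smul, hz], le_of_eq ?_⟩
  have hz' : 0 < ‖z‖ := norm_pos_iff.2 hz
  have hsmul : z - (‖x‖ / ‖z‖) • z = (1 - ‖x‖ / ‖z‖) • z := by rw [sub_smul, one_smul]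
  rw [dist_eq_norm, hsmul, norm_smul, Real.norm_eq_abs, ← abs_of_pos hz', ← abs_mul,
    abs_of_pos hz']
  congr 1
  field_simp

/-- Up to the volume of the unit ball, `(2 * s) ^ (k + 1)` and
`(R + s) ^ (k + 1) - (R - s) ^ (k + 1)` are the volumes of a ball of radius `2 * s` and of the
annulus `R - s ≤ ‖z‖ ≤ R + s` in dimension `k + 1`. -/
theorem pow_le_mul_add_pow_sub_sub_pow {R s : ℝ} (hs : 0 < s) (hsR : 2 * s ≤ R) (k : ℕ) :
    (2 * s) ^ (k + 1) ≤ (4 * s / R) ^ k * ((R + s) ^ (k + 1) - (R - s) ^ (k + 1)) := by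
  have hR : 0 < R := by linarith
  have hhalf : (R / 2) ^ k ≤ (R - s) ^ k := pow_le_pow_left₀ (by positivity) (by linarith) k
  have hgap : 2 * s * (R - s) ^ k ≤ (R + s) ^ (k + 1) - (R - s) ^ (k + 1) := by
    have := pow_le_pow_left₀ (by linarith : 0 ≤ R - s) (by linarith : R - s ≤ R + s) k
    rw [pow_succ, pow_succ]
    nlinarith
  calc (2 * s) ^ (k + 1) = (4 * s / R) ^ k * (2 * s * (R / 2) ^ k) := by
        rw [mul_left_comm, ← mul_pow, show 4 * s / R * (R / 2) = 2 * s by field_simp; ring,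
          pow_succ']
    _ ≤ (4 * s / R) ^ k * (2 * s * (R - s) ^ k) := by gcongr
    _ ≤ _ := by gcongr

theorem ofReal_mul_inv_sq_le_tsum_indicator {E : Type*} [NormedAddCommGroup E] {x : E}
    (hx : x ≠ 0) (y : E) :
    ENNReal.ofReal (‖x‖ ^ 2 * (‖x - y‖ ^ 2)⁻¹) ≤ ENNReal.ofReal 16 +
      ∑' j : ℕ, (closedBall x (‖x‖ / 2 ^ (j + 2))).indicator
        (fun _ => ENNReal.ofReal (4 ^ (j + 3))) y := by
  set R := ‖x‖
  have hR : 0 < R := norm_pos_iff.2 hx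
  set d := ‖x - y‖
  rcases (norm_nonneg (x - y)).eq_or_lt with hd | hd
  · simp [d, ← hd]
  rcases lt_or_ge (R / 4) d with hfar | hnear
  · refine le_add_right (ENNReal.ofReal_le_ofReal ?_)
    rw [← div_eq_mul_inv, div_le_iff₀ (by positivity)]
    nlinarith
  obtain ⟨j, hjle, hjlt⟩ := exists_nat_pow_near (x := R / (4 * d))
    (by rw [one_le_div₀ (by positivity)]; linarith) one_lt_two
  rw [le_div_iff₀ (by positivity)] at hjle
  rw [div_lt_iff₀ (by positivity)] at hjlt
  have hmem : y ∈ closedBall x (R / 2 ^ (j + 2)) := by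
    rw [mem_closedBall_comm, mem_closedBall, dist_eq_norm, le_div_iff₀ (by positivity)]
    calc d * 2 ^ (j + 2) = 2 ^ j * (4 * d) := by ring
      _ ≤ R := hjle
  refine le_add_left (le_trans ?_ (ENNReal.le_tsum j))
  rw [indicator_of_mem hmem]
  refine ENNReal.ofReal_le_ofReal ?_
  rw [← div_eq_mul_inv, div_le_iff₀ (by positivity)]
  have h4 : (4 : ℝ) ^ (j + 3) = (2 ^ (j + 1) * 4) ^ 2 := by
    rw [mul_pow, ← pow_mul, show (4 : ℝ) = 2 ^ 2 by norm_num, ← pow_mul, ← pow_mul, ← pow_add]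
    ring_nf
  rw [h4, ← mul_pow]
  exact pow_le_pow_left₀ hR.le (by linarith) 2

section RotationInvariant

variable {E : Type*} [NormedAddCommGroup E] [InnerProductSpace ℝ E] [MeasurableSpace E]
  [BorelSpace E] {ν : Measure E}

theorem measure_closedBall_eq_of_norm_eq (hν : ∀ O : E ≃ₗᵢ[ℝ] E, MeasurePreserving O ν ν)
    {x z : E} (h : ‖x‖ = ‖z‖) (s : ℝ) : ν (closedBall z s) = ν (closedBall x s) := by
  set O := Submodule.reflection (ℝ ∙ (x - z))ᗮ
  have hOx : O.symm z = x := by rw [O.symm_apply_eq, Submodule.reflection_sub h]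
  rw [← (hν O).measure_preimage measurableSet_closedBall.nullMeasurableSet,
    LinearIsometryEquiv.preimage_closedBall, hOx]

/-- Every ball of radius `2 * s` centred in the annulus contains a rotated copy of
`closedBall x s`; integrate this over the annulus and swap the integrals. -/
theorem measure_closedBall_mul_addHaar_annulus_le [FiniteDimensional ℝ E] [SFinite ν]
    (hν : ∀ O : E ≃ₗᵢ[ℝ] E, MeasurePreserving O ν ν) (μ : Measure E) [μ.IsAddHaarMeasure]
    (x : E) (s : ℝ) :
    ν (closedBall x s) * μ (closedBall 0 (‖x‖ + s) \ ball 0 (‖x‖ - s)) ≤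
      μ (closedBall 0 (2 * s)) * ν univ := by
  set A := closedBall (0 : E) (‖x‖ + s) \ ball 0 (‖x‖ - s)
  set S := {p : E × E | p.1 ∈ A ∧ dist p.2 p.1 ≤ 2 * s}
  have hS : MeasurableSet S :=
    ((measurableSet_closedBall.diff measurableSet_ball).preimage measurable_fst).inter
      (isClosed_le (continuous_snd.dist continuous_fst) continuous_const).measurableSet
  have hball_le : ∀ z ∈ A, ν (closedBall x s) ≤ ν (Prod.mk z ⁻¹' S) := by
    rintro z hz
    obtain ⟨z', hz'x, hzz'⟩ := exists_norm_eq_dist_le x z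
    have hnear : |‖z‖ - ‖x‖| ≤ s := by
      simp only [A, mem_sdiff, mem_closedBall, mem_ball, dist_zero_right, not_lt] at hz
      exact abs_sub_le_iff.2 ⟨by linarith, by linarith⟩
    rw [← measure_closedBall_eq_of_norm_eq hν hz'x.symm]
    refine measure_mono fun y hy => ⟨hz, ?_⟩
    exact closedBall_subset_closedBall' (by rw [dist_comm]; linarith) hy
  calc ν (closedBall x s) * μ A = ∫⁻ _ in A, ν (closedBall x s) ∂μ :=
        (setLIntegral_const _ _).symm
    _ ≤ ∫⁻ z in A, ν (Prod.mk z ⁻¹' S) ∂μ :=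
      setLIntegral_mono (measurable_measure_prodMk_left hS) hball_le
    _ ≤ ∫⁻ z, ν (Prod.mk z ⁻¹' S) ∂μ := setLIntegral_le_lintegral _ _
    _ = ∫⁻ y, μ ((·, y) ⁻¹' S) ∂ν := by rw [← Measure.prod_apply hS, Measure.prod_apply_symm hS]
    _ ≤ ∫⁻ _, μ (closedBall 0 (2 * s)) ∂ν := lintegral_mono fun y =>
      (measure_mono fun _ hz => mem_closedBall_comm.1 hz.2).trans_eq
        (Measure.addHaar_closedBall_center μ y _)
    _ = μ (closedBall 0 (2 * s)) * ν univ := lintegral_const _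

theorem measure_closedBall_le_of_four_mul_le [FiniteDimensional ℝ E] [SFinite ν]
    (hν : ∀ O : E ≃ₗᵢ[ℝ] E, MeasurePreserving O ν ν) {x : E} {s : ℝ} (hs : 0 < s)
    (hsx : 4 * s ≤ ‖x‖) :
    ν (closedBall x s) ≤ ENNReal.ofReal ((4 * s / ‖x‖) ^ (finrank ℝ E - 1)) * ν univ := by
  set R := ‖x‖
  have : Nontrivial E := ⟨⟨x, 0, norm_pos_iff.1 (by linarith)⟩⟩
  obtain ⟨k, hk⟩ : ∃ k, finrank ℝ E = k + 1 := Nat.exists_eq_add_one.2 finrank_pos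
  set μ : Measure E := Measure.addHaar
  have hsub : ball (0 : E) (R - s) ⊆ closedBall 0 (R + s) :=
    ball_subset_closedBall.trans (closedBall_subset_closedBall (by linarith))
  have hannulus : μ (closedBall 0 (R + s) \ ball 0 (R - s)) =
      ENNReal.ofReal ((R + s) ^ (k + 1) - (R - s) ^ (k + 1)) * μ (ball 0 1) := by
    rw [measure_sdiff hsub measurableSet_ball.nullMeasurableSet measure_ball_lt_top.ne,
      Measure.addHaar_ball μ (0 : E) (r := R - s) (by linarith),
      Measure.addHaar_closedBall μ _ (by linarith), hk,
      ← ENNReal.sub_mul (fun _ _ => measure_ball_lt_top.ne),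
      ← ENNReal.ofReal_sub _ (pow_nonneg (by linarith) _)]
  have hannulus_pos : 0 < (R + s) ^ (k + 1) - (R - s) ^ (k + 1) :=
    sub_pos.2 (pow_lt_pow_left₀ (by linarith) (by linarith) (Nat.succ_ne_zero k))
  have hmain := measure_closedBall_mul_addHaar_annulus_le hν μ x s
  rw [hannulus, Measure.addHaar_closedBall μ _ (by linarith), hk] at hmain
  have hratio : ENNReal.ofReal ((2 * s) ^ (k + 1)) ≤ ENNReal.ofReal ((4 * s / R) ^ k) *
      ENNReal.ofReal ((R + s) ^ (k + 1) - (R - s) ^ (k + 1)) := by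
    rw [← ENNReal.ofReal_mul (by positivity)]
    exact ENNReal.ofReal_le_ofReal (pow_le_mul_add_pow_sub_sub_pow hs (by linarith) k)
  have hunit : μ (ball 0 1) ≠ 0 := (measure_ball_pos μ _ one_pos).ne'
  rw [hk, Nat.add_sub_cancel]
  refine (ENNReal.mul_le_mul_iff_left (mul_ne_zero (by simpa using hannulus_pos) hunit)
    (ENNReal.mul_ne_top ENNReal.ofReal_ne_top measure_ball_lt_top.ne)).1 (hmain.trans ?_)
  calc ENNReal.ofReal ((2 * s) ^ (k + 1)) * μ (ball 0 1) * ν univ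
      ≤ ENNReal.ofReal ((4 * s / R) ^ k) * ENNReal.ofReal ((R + s) ^ (k + 1) - (R - s) ^ (k + 1))
          * μ (ball 0 1) * ν univ := by gcongr
    _ = _ := by ring

theorem ofReal_four_pow_mul_measure_closedBall_le [FiniteDimensional ℝ E] [SFinite ν]
    (hE : 4 ≤ finrank ℝ E) (hν : ∀ O : E ≃ₗᵢ[ℝ] E, MeasurePreserving O ν ν) {x : E}
    (hx : x ≠ 0) (j : ℕ) :
    ENNReal.ofReal (4 ^ (j + 3)) * ν (closedBall x (‖x‖ / 2 ^ (j + 2))) ≤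
      ENNReal.ofReal (64 * (1 / 2) ^ j) * ν univ := by
  set R := ‖x‖
  have hR : 0 < R := norm_pos_iff.2 hx
  have hscale : 4 * (R / 2 ^ (j + 2)) / R = (1 / 2) ^ j := by
    rw [one_div_pow, pow_add]; field_simp; norm_num
  have hdecay : (((1 : ℝ) / 2) ^ j) ^ (finrank ℝ E - 1) ≤ ((1 / 2) ^ j) ^ 3 :=
    pow_le_pow_of_le_one (by positivity) (pow_le_one₀ (by norm_num) (by norm_num)) (by omega)
  calc ENNReal.ofReal (4 ^ (j + 3)) * ν (closedBall x (R / 2 ^ (j + 2)))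
      ≤ ENNReal.ofReal (4 ^ (j + 3)) * (ENNReal.ofReal (((1 / 2) ^ j) ^ 3) * ν univ) := by
        gcongr
        refine (measure_closedBall_le_of_four_mul_le hν (by positivity) ?_).trans ?_
        · rw [show 4 * (R / 2 ^ (j + 2)) = (1 / 2) ^ j * R by rw [← hscale]; field_simp]
          exact mul_le_of_le_one_left hR.le (pow_le_one₀ (by norm_num) (by norm_num))
        · rw [hscale]; gcongr
    _ = ENNReal.ofReal (64 * (1 / 2) ^ j) * ν univ := by
        rw [← mul_assoc, ← ENNReal.ofReal_mul (by positivity)]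
        congr 2
        have h : (4 : ℝ) ^ j * ((1 / 2) ^ 3) ^ j = (1 / 2) ^ j := by rw [← mul_pow]; norm_num
        rw [← pow_mul, mul_comm j 3, pow_mul, pow_add]
        linear_combination 64 * h

theorem lintegral_mul_inv_norm_sub_sq_le [FiniteDimensional ℝ E] [SFinite ν]
    (hE : 4 ≤ finrank ℝ E) (hν : ∀ O : E ≃ₗᵢ[ℝ] E, MeasurePreserving O ν ν) {x : E}
    (hx : x ≠ 0) :
    ∫⁻ y, ENNReal.ofReal (‖x‖ ^ 2 * (‖x - y‖ ^ 2)⁻¹) ∂ν ≤ 144 * ν univ := by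
  set R := ‖x‖
  calc ∫⁻ y, ENNReal.ofReal (R ^ 2 * (‖x - y‖ ^ 2)⁻¹) ∂ν
      ≤ ∫⁻ y, (ENNReal.ofReal 16 + ∑' j : ℕ, (closedBall x (R / 2 ^ (j + 2))).indicator
          (fun _ => ENNReal.ofReal (4 ^ (j + 3))) y) ∂ν :=
        lintegral_mono (ofReal_mul_inv_sq_le_tsum_indicator hx)
    _ = ENNReal.ofReal 16 * ν univ +
          ∑' j : ℕ, ENNReal.ofReal (4 ^ (j + 3)) * ν (closedBall x (R / 2 ^ (j + 2))) := by
        rw [lintegral_add_left measurable_const, lintegral_const, lintegral_tsum fun j =>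
          (measurable_const.indicator measurableSet_closedBall).aemeasurable]
        simp_rw [lintegral_indicator_const measurableSet_closedBall]
    _ ≤ ENNReal.ofReal 16 * ν univ + ∑' j : ℕ, ENNReal.ofReal (64 * (1 / 2) ^ j) * ν univ :=
        add_le_add le_rfl
          (ENNReal.tsum_le_tsum (ofReal_four_pow_mul_measure_closedBall_le hE hν hx))
    _ = 144 * ν univ := by
        rw [ENNReal.tsum_mul_right, ← ENNReal.ofReal_tsum_of_nonneg (fun _ => by positivity)
          (summable_geometric_two.mul_left 64), tsum_mul_left, tsum_geometric_two, ← add_mul,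
          ← ENNReal.ofReal_add (by norm_num) (by norm_num)]
        norm_num

end RotationInvariant

/-- Case 2 (n > 3) of the proof of Proposition 2.1 (iii): for `n ≥ 4` there is a constant
`C = C(n) > 0` so that for every radially symmetric integrable `f` and every `x ≠ 0`,
`|x|² ∫ |x − y|⁻² |f(y)| dH^n(y) ≤ C ∫ |f| dH^n`. -/
theorem radial_potential_quadratic_decay
    (n : ℕ) (hn : 4 ≤ n) :
    ∃ C : ℝ, 0 < C ∧ ∀ f : EuclideanSpace ℝ (Fin n) → ℝ, Measurable f →
      (∀ x y : EuclideanSpace ℝ (Fin n), ‖x‖ = ‖y‖ → f x = f y) →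
      Integrable f μH[(n : ℝ)] →
      ∀ x : EuclideanSpace ℝ (Fin n), x ≠ 0 →
        ENNReal.ofReal (‖x‖ ^ 2) *
            ∫⁻ y, ENNReal.ofReal ((‖x - y‖ ^ 2)⁻¹ * |f y|) ∂μH[(n : ℝ)] ≤
          ENNReal.ofReal (C * ∫ y, |f y| ∂μH[(n : ℝ)]) := by
  refine ⟨144, by norm_num, fun f hf hrad hint x hx => ?_⟩
  set ν := μH[(n : ℝ)].withDensity fun y => ENNReal.ofReal |f y|
  have : IsFiniteMeasure ν := isFiniteMeasure_withDensity_ofReal hint.abs.hasFiniteIntegral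
  have hν : ∀ O : EuclideanSpace ℝ (Fin n) ≃ₗᵢ[ℝ] _, MeasurePreserving O ν ν := fun O =>
    (O.toIsometryEquiv.measurePreserving_hausdorffMeasure _).withDensity_of_comp_eq
      O.toHomeomorph.measurableEmbedding (funext fun y => by simp [hrad (O y) y (O.norm_map y)])
  have hmass : ν univ = ENNReal.ofReal (∫ y, |f y| ∂μH[(n : ℝ)]) := by
    rw [withDensity_apply _ MeasurableSet.univ, Measure.restrict_univ,
      ofReal_integral_eq_lintegral_ofReal hint.abs (ae_of_all _ fun _ => abs_nonneg _)]
  calc ENNReal.ofReal (‖x‖ ^ 2) * ∫⁻ y, ENNReal.ofReal ((‖x - y‖ ^ 2)⁻¹ * |f y|) ∂μH[(n : ℝ)]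
      = ∫⁻ y, ENNReal.ofReal (‖x‖ ^ 2 * (‖x - y‖ ^ 2)⁻¹) ∂ν := by
        rw [← lintegral_const_mul' _ _ ENNReal.ofReal_ne_top,
          lintegral_withDensity_eq_lintegral_mul _ hf.abs.ennreal_ofReal (by fun_prop)]
        congr with y
        rw [Pi.mul_apply, ← ENNReal.ofReal_mul (abs_nonneg _),
          ← ENNReal.ofReal_mul (by positivity), mul_comm |f y|, mul_assoc]
    _ ≤ 144 * ν univ :=
        lintegral_mul_inv_norm_sub_sq_le (by rwa [finrank_euclideanSpace_fin]) hν hx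
    _ = ENNReal.ofReal (144 * ∫ y, |f y| ∂μH[(n : ℝ)]) := by
        rw [hmass, ENNReal.ofReal_mul (by norm_num), ENNReal.ofReal_ofNat]
end

section
/- Let n ≥ 3 and k ≥ 1 be integers. For every x ∈ ℝⁿ with x ≠ 0, the k-fold iterated Laplacian of log|x| satisfies Δ^k (log|·|)(x) = (n − 2) · ( ∏_{j=1}^{k−1} 2j (2j + 2 − n) ) · |x|^{−2k}, where the empty product (for k = 1) is 1. -/
open MeasureTheory Filter Metric Real Topology

/-- The Euclidean Laplacian `Δu = ∑ ∂²u/∂x_k²` on `ℝⁿ`. -/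
noncomputable def laplacian {n : ℕ} (f : EuclideanSpace ℝ (Fin n) → ℝ)
    (x : EuclideanSpace ℝ (Fin n)) : ℝ :=
  ∑ i : Fin n, iteratedFDeriv ℝ 2 f x ![EuclideanSpace.single i 1, EuclideanSpace.single i 1]

/-! A radial function `x ↦ g (‖x‖²)` on a `d`-dimensional space has Laplacian
`4 ‖x‖² g''(‖x‖²) + 2 d g'(‖x‖²)`. Since `log ‖x‖ = log (‖x‖²) / 2`, this gives
`Δ log ‖x‖ = (d - 2) (‖x‖²)⁻¹`, and for `g t = t ^ m` it gives
`Δ (‖x‖²) ^ m = 2m (2m + d - 2) (‖x‖²) ^ (m - 1)`; applying the latter with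
`m = -1, -2, …, -(k - 1)` produces the factors `2j (2j + 2 - d)`. -/

open scoped Laplacian RealInnerProductSpace

section Radial

variable {E : Type*} [NormedAddCommGroup E] [InnerProductSpace ℝ E]

theorem hasFDerivAt_comp_norm_sq {g : ℝ → ℝ} {g' : ℝ} {x : E} (hg : HasDerivAt g g' (‖x‖ ^ 2)) :
    HasFDerivAt (fun z : E => g (‖z‖ ^ 2)) ((2 * g') • innerSL ℝ x) x := by
  refine (hg.comp_hasFDerivAt x (hasStrictFDerivAt_norm_sq x).hasFDerivAt).congr_fderiv ?_
  ext v
  simp only [smul_apply, innerSL_apply_apply, smul_eq_mul, nsmul_eq_mul]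
  norm_num
  ring

variable [FiniteDimensional ℝ E]

theorem laplacian_comp_norm_sq {g g' : ℝ → ℝ} {g'' : ℝ} {x : E}
    (hg : ∀ᶠ t in 𝓝 (‖x‖ ^ 2), HasDerivAt g (g' t) t) (hg' : HasDerivAt g' g'' (‖x‖ ^ 2)) :
    Δ (fun z : E => g (‖z‖ ^ 2)) x =
      4 * ‖x‖ ^ 2 * g'' + 2 * Module.finrank ℝ E * g' (‖x‖ ^ 2) := by
  -- `innerSL ℝ` is only conjugate-linear in its type; `B` retypes it so that `smul`, `+` and
  -- `hasFDerivAt` apply.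
  let B : E →L[ℝ] E →L[ℝ] ℝ := innerSL ℝ
  have hB (u v : E) : B u v = ⟪u, v⟫ := rfl
  have hfderiv : fderiv ℝ (fun z : E => g (‖z‖ ^ 2)) =ᶠ[𝓝 x]
      fun y => (2 * g' (‖y‖ ^ 2)) • B y := by
    have hc : Continuous fun z : E => ‖z‖ ^ 2 := by fun_prop
    filter_upwards [hc.continuousAt.eventually hg] with y hy
    exact (hasFDerivAt_comp_norm_sq hy).fderiv
  have hsecond : HasFDerivAt (fun y => (2 * g' (‖y‖ ^ 2)) • B y)
      ((2 * g' (‖x‖ ^ 2)) • B + ((2 * (2 * g'')) • B x).smulRight (B x)) x :=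
    (hasFDerivAt_comp_norm_sq (hg'.const_mul 2)).smul B.hasFDerivAt
  let b := stdOrthonormalBasis ℝ E
  rw [InnerProductSpace.laplacian_eq_iteratedFDeriv_orthonormalBasis _ b]
  simp only [iteratedFDeriv_two_apply, Matrix.cons_val_zero, Matrix.cons_val_one,
    hfderiv.fderiv_eq, hsecond.fderiv]
  calc ∑ i, (2 * g' (‖x‖ ^ 2) * B (b i) (b i) + 2 * (2 * g'') * B x (b i) * B x (b i))
      = ∑ i, (2 * g' (‖x‖ ^ 2) + 4 * g'' * ⟪b i, x⟫ ^ 2) := by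
        refine Finset.sum_congr rfl fun i _ => ?_
        simp only [hB, real_inner_self_eq_norm_sq, b.orthonormal.1 i, real_inner_comm x]
        ring
    _ = 4 * ‖x‖ ^ 2 * g'' + 2 * Module.finrank ℝ E * g' (‖x‖ ^ 2) := by
        rw [Finset.sum_add_distrib, Finset.sum_const, ← Finset.mul_sum, b.sum_sq_inner_right]
        simp
        ring

theorem laplacian_const_mul_norm_sq_zpow (c : ℝ) (m : ℤ) {x : E} (hx : x ≠ 0) :
    Δ (fun z : E => c * (‖z‖ ^ 2) ^ m) x =
      c * (2 * m * (2 * m + Module.finrank ℝ E - 2)) * (‖x‖ ^ 2) ^ (m - 1) := by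
  have ht : 0 < ‖x‖ ^ 2 := by positivity
  rw [laplacian_comp_norm_sq (g' := fun t => c * (m * t ^ (m - 1)))
    (g'' := c * (m * ((m - 1 : ℤ) * (‖x‖ ^ 2) ^ (m - 1 - 1))))
    ((eventually_ne_nhds ht.ne').mono fun t ht => ((hasDerivAt_zpow m t (.inl ht)).const_mul c))
    (((hasDerivAt_zpow (m - 1) _ (.inl ht.ne')).const_mul _).const_mul c),
    zpow_sub_one₀ ht.ne' (m - 1)]
  field_simp
  push_cast
  ring

theorem laplacian_log_norm {x : E} (hx : x ≠ 0) :
    Δ (fun z : E => log ‖z‖) x = (Module.finrank ℝ E - 2) * (‖x‖ ^ 2) ^ (-1 : ℤ) := by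
  have ht : 0 < ‖x‖ ^ 2 := by positivity
  have hlog : (fun z : E => log ‖z‖) = fun z => log (‖z‖ ^ 2) / 2 := by
    ext z
    rw [Real.log_pow]
    push_cast
    ring
  rw [hlog, laplacian_comp_norm_sq (g' := fun t => t⁻¹ / 2) (g'' := -((‖x‖ ^ 2) ^ 2)⁻¹ / 2)
    ((eventually_ne_nhds ht.ne').mono fun t ht => (hasDerivAt_log ht).div_const 2)
    ((hasDerivAt_inv ht.ne').div_const 2)]
  field_simp
  ring

theorem iterate_laplacian_log_norm {k : ℕ} (hk : 1 ≤ k) {x : E} (hx : x ≠ 0) :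
    (Δ : (E → ℝ) → E → ℝ)^[k] (fun z => log ‖z‖) x =
      (Module.finrank ℝ E - 2) *
        (∏ j ∈ Finset.Icc 1 (k - 1), (2 * (j : ℝ)) * (2 * j + 2 - Module.finrank ℝ E)) *
        (‖x‖ ^ 2) ^ (-(k : ℤ)) := by
  induction k, hk using Nat.le_induction generalizing x with
  | base => simpa using laplacian_log_norm hx
  | succ k hk ih =>
    have hev : _ =ᶠ[𝓝 x] _ := (eventually_ne_nhds hx).mono fun z hz => ih hz
    obtain ⟨k, rfl⟩ := Nat.exists_eq_add_of_le' hk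
    rw [Function.iterate_succ_apply', (InnerProductSpace.laplacian_congr_nhds hev).eq_of_nhds,
      laplacian_const_mul_norm_sq_zpow _ _ hx, Nat.add_sub_cancel, Nat.add_sub_cancel,
      Finset.prod_Icc_succ_top (by omega)]
    push_cast
    ring_nf

end Radial

theorem laplacian_eq_innerProductSpace_laplacian {n : ℕ} :
    (laplacian : (EuclideanSpace ℝ (Fin n) → ℝ) → _) = Δ := by
  ext f x
  simp [InnerProductSpace.laplacian_eq_iteratedFDeriv_orthonormalBasis f
    (EuclideanSpace.basisFun (Fin n) ℝ), laplacian]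

theorem iterated_laplacian_log_norm_general
    (n : ℕ) (k : ℕ) (hk : 1 ≤ k)
    (x : EuclideanSpace ℝ (Fin n)) (hx : x ≠ 0) :
    (laplacian^[k] (fun y : EuclideanSpace ℝ (Fin n) => Real.log ‖y‖)) x =
      ((n : ℝ) - 2) *
        (∏ j ∈ Finset.Icc 1 (k - 1), ((2 * (j : ℝ)) * (2 * (j : ℝ) + 2 - (n : ℝ)))) *
        ‖x‖ ^ (-(2 * (k : ℤ))) := by
  rw [laplacian_eq_innerProductSpace_laplacian, iterate_laplacian_log_norm hk hx,
    finrank_euclideanSpace_fin, ← zpow_natCast, ← zpow_mul]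
  push_cast
  ring_nf

/-- The pointwise computation underlying Proposition 2.1 (iv): for `n ≥ 3`, `k ≥ 1` and
`x ≠ 0`, `Δ^k log|x| = (n − 2) · (∏_{j=1}^{k−1} 2j (2j + 2 − n)) · |x|^{−2k}`. -/
theorem iterated_laplacian_log_norm
    (n : ℕ) (hn : 3 ≤ n) (k : ℕ) (hk : 1 ≤ k)
    (x : EuclideanSpace ℝ (Fin n)) (hx : x ≠ 0) :
    (laplacian^[k] (fun y : EuclideanSpace ℝ (Fin n) => Real.log ‖y‖)) x =
      ((n : ℝ) - 2) *
        (∏ j ∈ Finset.Icc 1 (k - 1), ((2 * (j : ℝ)) * (2 * (j : ℝ) + 2 - (n : ℝ)))) *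
        ‖x‖ ^ (-(2 * (k : ℤ))) :=
  iterated_laplacian_log_norm_general n k hk x hx
end

section
/- Let u : (0, ∞) → ℝ be differentiable and β ∈ ℝ. If lim_{r→∞} r u′(r) = −β and ∫₁^∞ e^{u(r)} dr = ∞, then β ≤ 1. -/
open MeasureTheory Filter Metric Real Topology

/-! If `β > 1`, fix `1 < b < β`. Eventually `r u'(r) ≤ -b`, so `u(r) + b log r` is eventually
nonincreasing, i.e. `e^{u(r)} = O(r^{-b})`, which is integrable at infinity; together with
continuity on compact intervals this makes `∫₁^∞ e^{u(r)} dr` finite. -/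

theorem antitoneOn_add_mul_log_of_mul_deriv_le {u : ℝ → ℝ} {b R : ℝ} (hR : 0 < R)
    (hdiff : ∀ r, R ≤ r → DifferentiableAt ℝ u r)
    (hderiv : ∀ r, R < r → r * deriv u r ≤ -b) :
    AntitoneOn (fun r => u r + b * log r) (Set.Ici R) := by
  have hdiff' : ∀ r, R ≤ r → DifferentiableAt ℝ (fun r => u r + b * log r) r := fun r hr =>
    (hdiff r hr).add ((differentiableAt_log (hR.trans_le hr).ne').const_mul b)
  refine antitoneOn_of_deriv_nonpos (convex_Ici R)
    (fun r hr => (hdiff' r hr).continuousAt.continuousWithinAt)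
    (fun r hr => (hdiff' r (le_of_lt (by simpa using hr))).differentiableWithinAt) fun r hr => ?_
  rw [interior_Ici] at hr
  have hr0 : 0 < r := hR.trans hr
  have hlog : HasDerivAt (fun r => u r + b * log r) (deriv u r + b * r⁻¹) r :=
    (hdiff r hr.le).hasDerivAt.add ((hasDerivAt_log hr0.ne').const_mul b)
  rw [hlog.deriv]
  have hmul : r * (deriv u r + b * r⁻¹) ≤ 0 := by
    rw [mul_add, mul_left_comm, mul_inv_cancel₀ hr0.ne', mul_one]
    linarith [hderiv r hr]
  exact nonpos_of_mul_nonpos_right hmul hr0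

theorem isBigO_exp_rpow_of_tendsto_mul_deriv {u : ℝ → ℝ} {β b : ℝ}
    (hdiff : ∀ᶠ r in atTop, DifferentiableAt ℝ u r)
    (hlim : Tendsto (fun r => r * deriv u r) atTop (𝓝 (-β))) (hb : b < β) :
    (fun r => exp (u r)) =O[atTop] fun r => r ^ (-b) := by
  obtain ⟨R, hR⟩ := eventually_atTop.mp
    ((hdiff.and (hlim.eventually_le_const (neg_lt_neg hb))).and (eventually_gt_atTop 0))
  have hR0 : 0 < R := (hR R le_rfl).2
  have hanti := antitoneOn_add_mul_log_of_mul_deriv_le hR0 (fun r hr => (hR r hr).1.1)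
    fun r hr => (hR r hr.le).1.2
  refine Asymptotics.IsBigO.of_bound (exp (u R + b * log R)) ?_
  filter_upwards [eventually_ge_atTop R] with r hr
  have hr0 : 0 < r := hR0.trans_le hr
  have hur : u r ≤ u R + b * log R - b * log r := by
    linarith [hanti Set.self_mem_Ici hr hr]
  rw [norm_of_nonneg (exp_pos _).le, norm_of_nonneg (rpow_nonneg hr0.le _),
    rpow_def_of_pos hr0, ← exp_add]
  exact exp_le_exp.mpr (by linarith)

theorem integrableOn_Ici_exp_of_tendsto_mul_deriv {u : ℝ → ℝ} {β a : ℝ}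
    (hdiff : ∀ r, a ≤ r → DifferentiableAt ℝ u r)
    (hlim : Tendsto (fun r => r * deriv u r) atTop (𝓝 (-β))) (hβ : 1 < β) :
    IntegrableOn (fun r => exp (u r)) (Set.Ici a) := by
  have hcont : ContinuousOn (fun r => exp (u r)) (Set.Ici a) := fun r hr =>
    (hdiff r hr).continuousAt.rexp.continuousWithinAt
  refine (hcont.locallyIntegrableOn measurableSet_Ici).integrableOn_of_isBigO_atTop
    (isBigO_exp_rpow_of_tendsto_mul_deriv (b := (1 + β) / 2) (eventually_atTop.mpr ⟨a, hdiff⟩)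
      hlim (by linarith)) ?_
  exact integrableAtFilter_rpow_atTop_iff.mpr (by linarith)

/-- The elementary lemma concluding the proof of Proposition 2.1 (vi): if `u` is
differentiable on `(0,∞)` with `r u'(r) → −β` as `r → ∞`, and `∫₁^∞ e^{u(r)} dr = ∞`,
then `β ≤ 1`. -/
theorem radial_completeness_limit_bound
    (u : ℝ → ℝ) (β : ℝ)
    (hdiff : ∀ r : ℝ, 0 < r → DifferentiableAt ℝ u r)
    (hlim : Filter.Tendsto (fun r : ℝ => r * deriv u r) Filter.atTop (𝓝 (-β)))
    (hint : ∫⁻ r in Set.Ioi (1 : ℝ), ENNReal.ofReal (Real.exp (u r)) = ⊤) :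
    β ≤ 1 := by
  by_contra! hβ
  have hu : IntegrableOn (fun r => exp (u r)) (Set.Ioi 1) :=
    (integrableOn_Ici_exp_of_tendsto_mul_deriv (fun r hr => hdiff r (one_pos.trans_le hr))
      hlim hβ).mono_set Set.Ioi_subset_Ici_self
  exact hu.lintegral_lt_top.ne hint
end

section
/- Let n ≥ 3. There is a constant C > 0, depending only on n, such that for every r > 0 and every y ∈ ℝⁿ with |y| ≥ r/2, (1 / H^{n−1}(∂B_r(0))) ∫_{∂B_r(0)} | log( |y| / |x − y| ) | dH^{n−1}(x) ≤ C. -/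
/-!
Caps of the sphere `‖x‖ = r` in an `(m + 1)`-dimensional Euclidean space are graphs over a
hyperplane: the cap `{⟪e, x⟫ ≥ h}` is the image of a disc under
`z ↦ z + √(r² - ‖z‖²) e`, which is `(1 + r / h)`-Lipschitz there. Covering the sphere by the
`2 (m + 1)` caps in the directions `±bᵢ` of an orthonormal basis (with `h = r / √(m + 1)`) gives
`μH[m] (sphere ∩ closedBall c ρ) ≤ C ρ^m`, while projecting the sphere onto a hyperplane gives
`μH[m] (sphere) ≥ c r^m`.

For the kernel, `|log (‖y‖ / ‖x - y‖)| ≤ log 3 + log⁺ (‖y‖ / ‖x - y‖)` on the sphere, and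
`log⁺ (R / d) ≤ 1 + #{k ≥ 1 | d ≤ R e^{-k}}`. A point of the sphere within `‖y‖ / e` of `y` forces
`‖y‖ ≤ 2r`, so the `k`-th shell has measure `≲ (r e^{-k})^m ≤ r^m 2^{-k}`, and summing
the shells bounds the integral by a multiple of `μH[m] (sphere)`.
-/

open MeasureTheory Metric Module
open scoped ENNReal NNReal RealInnerProductSpace

lemma Real.abs_sqrt_sub_sqrt_le {a b h : ℝ} (hh : 0 < h) (ha : h ^ 2 ≤ a) (hb : h ^ 2 ≤ b) :
    |√a - √b| ≤ |a - b| / (2 * h) := by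
  have hsa : h ≤ √a := Real.le_sqrt_of_sq_le ha
  have hsb : h ≤ √b := Real.le_sqrt_of_sq_le hb
  have hab : a - b = (√a - √b) * (√a + √b) := by
    rw [mul_comm, ← sq_sub_sq, Real.sq_sqrt ((sq_nonneg h).trans ha),
      Real.sq_sqrt ((sq_nonneg h).trans hb)]
  rw [le_div_iff₀ (by positivity), hab, abs_mul, abs_of_pos (by linarith : 0 < √a + √b)]
  gcongr
  linarith

lemma abs_norm_sq_sub_norm_sq_le {E : Type*} [SeminormedAddCommGroup E] {r : ℝ} {x y : E}
    (hx : ‖x‖ ≤ r) (hy : ‖y‖ ≤ r) : |‖x‖ ^ 2 - ‖y‖ ^ 2| ≤ 2 * r * ‖x - y‖ := by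
  calc |‖x‖ ^ 2 - ‖y‖ ^ 2| = (‖x‖ + ‖y‖) * |‖x‖ - ‖y‖| := by
        rw [sq_sub_sq, abs_mul, abs_of_nonneg (by positivity)]
    _ ≤ 2 * r * ‖x - y‖ := by
        have := norm_nonneg x
        gcongr
        · linarith
        · linarith
        · exact abs_norm_sub_norm_le x y

lemma ofReal_abs_log_div_le {a b c : ℝ} (ha : 0 < a) (hb : 0 ≤ b) (hbc : b ≤ c * a) :
    ENNReal.ofReal |Real.log (a / b)| ≤
      ENNReal.ofReal (Real.log c) + ENNReal.ofReal (Real.log (a / b)) := by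
  rcases le_or_gt 0 (Real.log (a / b)) with hL | hL
  · rw [abs_of_nonneg hL]
    exact le_add_self
  · have hb0 : 0 < b := hb.lt_of_ne fun h => by simp [← h] at hL
    rw [abs_of_neg hL, ← Real.log_inv, inv_div, ENNReal.ofReal_of_nonpos hL.le, add_zero]
    exact ENNReal.ofReal_le_ofReal
      (Real.log_le_log (by positivity) ((div_le_iff₀ ha).2 hbc))

lemma Real.exp_neg_le_inv_two_pow (k : ℕ) : Real.exp (-k) ≤ 2⁻¹ ^ k := by
  rw [← Real.exp_one_rpow, Real.rpow_neg (Real.exp_pos 1).le, Real.rpow_natCast, ← inv_pow]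
  gcongr
  linarith [Real.add_one_le_exp 1]

section LogKernel

variable {X : Type*} [PseudoMetricSpace X]

lemma ofReal_log_div_dist_le_one_add_tsum (y : X) {R : ℝ} (hR : 0 ≤ R) (x : X) :
    ENNReal.ofReal (Real.log (R / dist x y)) ≤
      1 + ∑' k : ℕ, (closedBall y (R * Real.exp (-(k + 1)))).indicator 1 x := by
  set L := Real.log (R / dist x y)
  rcases le_or_gt L 0 with hL | hL
  · simp [ENNReal.ofReal_of_nonpos hL]
  have hd : 0 < dist x y := dist_nonneg.lt_of_ne fun h => by simp [L, ← h] at hL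
  have hRd : 0 < R / dist x y :=
    one_pos.trans ((Real.log_pos_iff (by positivity)).1 hL)
  set N := ⌊L⌋₊
  have hmem : ∀ k ∈ Finset.range N, x ∈ closedBall y (R * Real.exp (-(k + 1))) := by
    intro k hk
    have hkL : (k : ℝ) + 1 ≤ L := by
      have := Nat.floor_le hL.le
      have : (k : ℝ) + 1 ≤ N := by exact_mod_cast Finset.mem_range.1 hk
      linarith
    rw [mem_closedBall, Real.exp_neg, ← div_eq_mul_inv, le_div_iff₀ (Real.exp_pos _),
      ← le_div_iff₀' hd]
    exact (Real.exp_le_exp.2 hkL).trans (Real.exp_log hRd).le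
  calc ENNReal.ofReal L ≤ 1 + N := by
        rw [add_comm, ← ENNReal.ofReal_natCast, ← ENNReal.ofReal_one,
          ← ENNReal.ofReal_add N.cast_nonneg zero_le_one]
        exact ENNReal.ofReal_le_ofReal (Nat.lt_floor_add_one L).le
    _ = 1 + ∑ k ∈ Finset.range N, (closedBall y (R * Real.exp (-(k + 1)))).indicator 1 x := by
        rw [Finset.sum_congr rfl fun k hk => Set.indicator_of_mem (hmem k hk) 1]
        simp
    _ ≤ _ := by gcongr; exact ENNReal.sum_le_tsum _

variable [MeasurableSpace X] [OpensMeasurableSpace X]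

lemma lintegral_log_div_dist_le (μ : Measure X) (y : X) {R : ℝ} (hR : 0 ≤ R) (K : ℝ≥0∞)
    (hK : ∀ k : ℕ, μ (closedBall y (R * Real.exp (-(k + 1)))) ≤ K * 2⁻¹ ^ (k + 1)) :
    ∫⁻ x, ENNReal.ofReal (Real.log (R / dist x y)) ∂μ ≤ μ Set.univ + K := by
  calc ∫⁻ x, ENNReal.ofReal (Real.log (R / dist x y)) ∂μ
      ≤ ∫⁻ x, 1 + ∑' k : ℕ, (closedBall y (R * Real.exp (-(k + 1)))).indicator 1 x ∂μ :=
        lintegral_mono fun x => ofReal_log_div_dist_le_one_add_tsum y hR x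
    _ = μ Set.univ + ∑' k : ℕ, μ (closedBall y (R * Real.exp (-(k + 1)))) := by
        rw [lintegral_add_left measurable_const, lintegral_one,
          lintegral_tsum fun k => (measurable_one.indicator measurableSet_closedBall).aemeasurable]
        simp_rw [lintegral_indicator_one measurableSet_closedBall]
    _ ≤ μ Set.univ + ∑' k : ℕ, K * 2⁻¹ ^ (k + 1) := by gcongr with k; exact hK k
    _ = μ Set.univ + K := by
        rw [ENNReal.tsum_mul_left, ENNReal.tsum_geometric_add_one, ENNReal.one_sub_inv_two, inv_inv,
          ENNReal.inv_mul_cancel two_ne_zero ENNReal.ofNat_ne_top, mul_one]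

end LogKernel

lemma MeasureTheory.toReal_inv_mul_setIntegral_le {α : Type*} [MeasurableSpace α] {μ : Measure α}
    {s : Set α} {f : α → ℝ} (hf : ∀ x, 0 ≤ f x) {C : ℝ≥0∞} (hC : C ≠ ∞)
    (h : ∫⁻ x in s, ENNReal.ofReal (f x) ∂μ ≤ C * μ s) :
    (μ s).toReal⁻¹ * ∫ x in s, f x ∂μ ≤ C.toReal := by
  rcases eq_or_ne (μ s).toReal 0 with hs | hs
  · simp [hs]
  have hs_top : μ s ≠ ∞ := (ENNReal.toReal_ne_zero.1 hs).2
  have hint : ∫ x in s, f x ∂μ ≤ C.toReal * (μ s).toReal := by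
    by_cases hfi : Integrable f (μ.restrict s)
    · rw [integral_eq_lintegral_of_nonneg_ae (ae_of_all _ hf) hfi.aestronglyMeasurable,
        ← ENNReal.toReal_mul]
      exact ENNReal.toReal_mono (ENNReal.mul_ne_top hC hs_top) h
    · rw [integral_undef hfi]
      positivity
  calc (μ s).toReal⁻¹ * ∫ x in s, f x ∂μ ≤ (μ s).toReal⁻¹ * (C.toReal * (μ s).toReal) := by
        gcongr
    _ = C.toReal := by field_simp

section HemisphereGraph

variable {F : Type*} [NormedAddCommGroup F] [InnerProductSpace ℝ F] {e : F}

noncomputable def hemisphereGraph (r : ℝ) (e : F) (z : (ℝ ∙ e)ᗮ) : F :=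
  z + √(r ^ 2 - ‖z‖ ^ 2) • e

lemma norm_add_smul_sq_of_mem_orthogonal (he : ‖e‖ = 1) (z : (ℝ ∙ e)ᗮ) (t : ℝ) :
    ‖(z : F) + t • e‖ ^ 2 = ‖z‖ ^ 2 + t ^ 2 := by
  have hze : ⟪(z : F), e⟫ = 0 :=
    Submodule.inner_left_of_mem_orthogonal (Submodule.mem_span_singleton_self e) z.2
  rw [norm_add_sq_real, inner_smul_right, hze, norm_smul, he, Real.norm_eq_abs]
  simp [sq_abs]

lemma hemisphereGraph_mem_sphere (he : ‖e‖ = 1) {r : ℝ} (hr : 0 ≤ r) {z : (ℝ ∙ e)ᗮ}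
    (hz : ‖z‖ ≤ r) : hemisphereGraph r e z ∈ sphere (0 : F) r := by
  have hsq : ‖hemisphereGraph r e z‖ ^ 2 = r ^ 2 := by
    rw [hemisphereGraph, norm_add_smul_sq_of_mem_orthogonal he,
      Real.sq_sqrt (by nlinarith [norm_nonneg z])]
    ring
  rw [mem_sphere_zero_iff_norm]
  exact (sq_eq_sq₀ (norm_nonneg _) hr).1 hsq

lemma orthogonalProjectionOnto_hemisphereGraph (r : ℝ) (e : F) (z : (ℝ ∙ e)ᗮ) :
    (ℝ ∙ e)ᗮ.orthogonalProjectionOnto (hemisphereGraph r e z) = z := by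
  simp [hemisphereGraph, Submodule.orthogonalProjectionOnto_mem_subspace_eq_self,
    Submodule.orthogonalProjectionOnto_orthogonalComplement_singleton_eq_zero]

lemma orthogonalProjectionOnto_add_inner_smul (he : ‖e‖ = 1) (x : F) :
    ((ℝ ∙ e)ᗮ.orthogonalProjectionOnto x : F) + ⟪e, x⟫ • e = x := by
  rw [Submodule.coe_orthogonalProjectionOnto_apply,
    ← Submodule.starProjection_unit_singleton ℝ he, add_comm,
    Submodule.starProjection_add_starProjection_orthogonal]

lemma norm_orthogonalProjectionOnto_sq (he : ‖e‖ = 1) (x : F) :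
    ‖(ℝ ∙ e)ᗮ.orthogonalProjectionOnto x‖ ^ 2 = ‖x‖ ^ 2 - ⟪e, x⟫ ^ 2 := by
  have h := norm_add_smul_sq_of_mem_orthogonal he ((ℝ ∙ e)ᗮ.orthogonalProjectionOnto x) ⟪e, x⟫
  rw [orthogonalProjectionOnto_add_inner_smul he] at h
  linarith

lemma hemisphereGraph_orthogonalProjectionOnto (he : ‖e‖ = 1) {x : F}
    (hx : 0 ≤ ⟪e, x⟫) : hemisphereGraph ‖x‖ e ((ℝ ∙ e)ᗮ.orthogonalProjectionOnto x) = x := by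
  rw [hemisphereGraph, norm_orthogonalProjectionOnto_sq he, sub_sub_cancel, Real.sqrt_sq hx,
    orthogonalProjectionOnto_add_inner_smul he]

lemma lipschitzOnWith_hemisphereGraph (he : ‖e‖ = 1) {r h : ℝ} (hr : 0 ≤ r) (hh : 0 < h) :
    LipschitzOnWith (1 + r / h).toNNReal (hemisphereGraph r e)
      {z | h ^ 2 ≤ r ^ 2 - ‖z‖ ^ 2} := by
  refine LipschitzOnWith.of_dist_le' fun z hz w hw => ?_
  have hzr : ‖z‖ ≤ r := abs_le_of_sq_le_sq' (by nlinarith [Set.mem_ofPred.1 hz]) hr |>.2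
  have hwr : ‖w‖ ≤ r := abs_le_of_sq_le_sq' (by nlinarith [Set.mem_ofPred.1 hw]) hr |>.2
  have hsqrt := Real.abs_sqrt_sub_sqrt_le hh hz hw
  have hsq : |(r ^ 2 - ‖z‖ ^ 2) - (r ^ 2 - ‖w‖ ^ 2)| ≤ 2 * r * ‖z - w‖ := by
    rw [sub_sub_sub_cancel_left, abs_sub_comm]
    exact abs_norm_sq_sub_norm_sq_le hzr hwr
  calc dist (hemisphereGraph r e z) (hemisphereGraph r e w)
      = ‖((z - w : (ℝ ∙ e)ᗮ) : F) + (√(r ^ 2 - ‖z‖ ^ 2) - √(r ^ 2 - ‖w‖ ^ 2)) • e‖ := by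
        rw [dist_eq_norm, hemisphereGraph, hemisphereGraph, Submodule.coe_sub, sub_smul]
        abel_nf
    _ ≤ ‖z - w‖ + |√(r ^ 2 - ‖z‖ ^ 2) - √(r ^ 2 - ‖w‖ ^ 2)| := by
        refine (norm_add_le _ _).trans ?_
        rw [norm_smul, he, mul_one, Real.norm_eq_abs]
        rfl
    _ ≤ ‖z - w‖ + 2 * r * ‖z - w‖ / (2 * h) := by
        gcongr
        exact hsqrt.trans (by gcongr)
    _ = (1 + r / h) * dist z w := by
        rw [dist_eq_norm]
        field_simp

lemma finrank_orthogonal_span_unit {m : ℕ} (hF : finrank ℝ F = m + 1) (he : ‖e‖ = 1) :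
    finrank ℝ (ℝ ∙ e)ᗮ = m := by
  have : Fact (finrank ℝ F = m + 1) := ⟨hF⟩
  exact Submodule.finrank_orthogonal_span_singleton (norm_ne_zero_iff.1 (by simp [he]))

lemma sphere_subset_iUnion_caps {ι : Type*} [Fintype ι] [Nonempty ι]
    (b : OrthonormalBasis ι ℝ F) (r : ℝ) :
    sphere (0 : F) r ⊆ ⋃ i, {x ∈ sphere (0 : F) r |
      r / √(Fintype.card ι) ≤ ⟪Sum.elim (⇑b) (-⇑b) i, x⟫} := by
  intro x hx
  obtain ⟨i, hi⟩ := exists_eq_ciSup_of_finite (f := fun i => ‖⟪b i, x⟫‖)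
  have hr : r ≤ √(Fintype.card ι) * |⟪b i, x⟫| := by
    rw [← mem_sphere_zero_iff_norm.1 hx, ← Real.norm_eq_abs, hi]
    exact b.norm_le_card_mul_iSup_norm_inner x
  have hle : r / √(Fintype.card ι) ≤ |⟪b i, x⟫| := by
    rw [div_le_iff₀' (by positivity)]
    exact hr
  rcases abs_cases ⟪b i, x⟫ with ⟨habs, -⟩ | ⟨habs, -⟩
  · exact Set.mem_iUnion.2 ⟨Sum.inl i, hx, by simpa [habs] using hle⟩
  · exact Set.mem_iUnion.2 ⟨Sum.inr i, hx, by simpa [habs, inner_neg_left] using hle⟩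

end HemisphereGraph

noncomputable def unitBallHausdorffMeasure (m : ℕ) : ℝ≥0∞ :=
  μH[m] (ball (0 : EuclideanSpace ℝ (Fin m)) 1)

lemma unitBallHausdorffMeasure_pos (m : ℕ) : 0 < unitBallHausdorffMeasure m :=
  measure_ball_pos _ _ one_pos

lemma unitBallHausdorffMeasure_lt_top (m : ℕ) : unitBallHausdorffMeasure m < ∞ :=
  measure_ball_lt_top

lemma hausdorffMeasure_closedBall {K : Type*} [NormedAddCommGroup K] [InnerProductSpace ℝ K]
    [FiniteDimensional ℝ K] [MeasurableSpace K] [BorelSpace K] (x : K) {ρ : ℝ} (hρ : 0 ≤ ρ) :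
    μH[finrank ℝ K] (closedBall x ρ) =
      ENNReal.ofReal (ρ ^ finrank ℝ K) * unitBallHausdorffMeasure (finrank ℝ K) := by
  rw [Measure.addHaar_closedBall _ x hρ, unitBallHausdorffMeasure,
    ← (stdOrthonormalBasis ℝ K).repr.toIsometryEquiv.hausdorffMeasure_image]
  simp [LinearIsometryEquiv.image_ball]

section SphereMeasure

variable {F : Type*} [NormedAddCommGroup F] [InnerProductSpace ℝ F] [FiniteDimensional ℝ F]
  [MeasurableSpace F] [BorelSpace F] {m : ℕ}

lemma hausdorffMeasure_cap_inter_closedBall_le (hF : finrank ℝ F = m + 1) {e : F} (he : ‖e‖ = 1)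
    {r h ρ : ℝ} (hr : 0 ≤ r) (hh : 0 < h) (hρ : 0 ≤ ρ) (c : F) :
    μH[m] ({x ∈ sphere (0 : F) r | h ≤ ⟪e, x⟫} ∩ closedBall c ρ) ≤
      ENNReal.ofReal ((1 + r / h) * ρ) ^ m * unitBallHausdorffMeasure m := by
  set P := (ℝ ∙ e)ᗮ.orthogonalProjectionOnto
  have hsub : {x ∈ sphere (0 : F) r | h ≤ ⟪e, x⟫} ∩ closedBall c ρ ⊆
      hemisphereGraph r e '' ({z | h ^ 2 ≤ r ^ 2 - ‖z‖ ^ 2} ∩ closedBall (P c) ρ) := by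
    rintro x ⟨⟨hxr, hhx⟩, hxc⟩
    rw [mem_sphere_zero_iff_norm] at hxr
    refine ⟨P x, ⟨?_, ?_⟩, ?_⟩
    · rw [Set.mem_ofPred, norm_orthogonalProjectionOnto_sq he, hxr]
      nlinarith
    · rw [mem_closedBall, dist_eq_norm, ← map_sub]
      exact (Submodule.norm_orthogonalProjectionOnto_apply_le _ _).trans
        (mem_closedBall_iff_norm.1 hxc)
    · rw [← hxr]
      exact hemisphereGraph_orthogonalProjectionOnto he (hh.le.trans hhx)
  have hK := finrank_orthogonal_span_unit hF he
  calc μH[m] ({x ∈ sphere (0 : F) r | h ≤ ⟪e, x⟫} ∩ closedBall c ρ)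
      ≤ μH[m] (hemisphereGraph r e '' ({z | h ^ 2 ≤ r ^ 2 - ‖z‖ ^ 2} ∩ closedBall (P c) ρ)) :=
        measure_mono hsub
    _ ≤ ((1 + r / h).toNNReal : ℝ≥0∞) ^ (m : ℝ) * μH[m] (closedBall (P c) ρ) := by
        refine ((lipschitzOnWith_hemisphereGraph he hr hh).mono Set.inter_subset_left
          |>.hausdorffMeasure_image_le m.cast_nonneg).trans ?_
        gcongr
        exact Set.inter_subset_right
    _ = ENNReal.ofReal ((1 + r / h) * ρ) ^ m * unitBallHausdorffMeasure m := by
        rw [← hK, hausdorffMeasure_closedBall _ hρ, hK, ENNReal.rpow_natCast,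
          ENNReal.ofReal_mul (by positivity), mul_pow, ENNReal.ofReal_pow hρ, mul_assoc]
        rfl

noncomputable def sphereCapConst (m : ℕ) : ℝ≥0∞ :=
  2 * (m + 1) * ENNReal.ofReal (1 + √(m + 1)) ^ m * unitBallHausdorffMeasure m

lemma sphereCapConst_lt_top (m : ℕ) : sphereCapConst m < ∞ := by
  unfold sphereCapConst
  have := unitBallHausdorffMeasure_lt_top m
  finiteness

lemma hausdorffMeasure_sphere_inter_closedBall_le (hF : finrank ℝ F = m + 1) {r ρ : ℝ}
    (hr : 0 < r) (hρ : 0 ≤ ρ) (c : F) :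
    μH[m] (sphere (0 : F) r ∩ closedBall c ρ) ≤ sphereCapConst m * ENNReal.ofReal ρ ^ m := by
  set b := (stdOrthonormalBasis ℝ F).reindex (finCongr hF)
  have hcard : √(Fintype.card (Fin (m + 1))) = √(m + 1) := by simp
  have hunit : ∀ i, ‖Sum.elim (⇑b) (-⇑b) i‖ = 1 := by
    rintro (i | i) <;> simp [b.orthonormal.1 i]
  have hcap (i : Fin (m + 1) ⊕ Fin (m + 1)) := hausdorffMeasure_cap_inter_closedBall_le hF
    (hunit i) hr.le (by positivity : 0 < r / √(m + 1)) hρ c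
  calc μH[m] (sphere (0 : F) r ∩ closedBall c ρ)
      ≤ μH[m] (⋃ i, {x ∈ sphere (0 : F) r | r / √(m + 1) ≤ ⟪Sum.elim (⇑b) (-⇑b) i, x⟫} ∩
          closedBall c ρ) := by
        rw [← Set.iUnion_inter, ← hcard]
        exact measure_mono (Set.inter_subset_inter_left _ (sphere_subset_iUnion_caps b r))
    _ ≤ ∑ i, ENNReal.ofReal ((1 + r / (r / √(m + 1))) * ρ) ^ m * unitBallHausdorffMeasure m :=
        (measure_iUnion_fintype_le _ _).trans (Finset.sum_le_sum fun i _ => hcap i)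
    _ = sphereCapConst m * ENNReal.ofReal ρ ^ m := by
        rw [div_div_cancel₀ hr.ne', Finset.sum_const, Finset.card_univ, Fintype.card_sum,
          Fintype.card_fin, ENNReal.ofReal_mul (by positivity), mul_pow, sphereCapConst]
        ring

lemma le_hausdorffMeasure_sphere (hF : finrank ℝ F = m + 1) {r : ℝ} (hr : 0 ≤ r) :
    ENNReal.ofReal (r ^ m) * unitBallHausdorffMeasure m ≤ μH[m] (sphere (0 : F) r) := by
  have : Nontrivial F := Module.nontrivial_of_finrank_eq_succ hF
  obtain ⟨e, he⟩ := exists_norm_eq F zero_le_one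
  have hK := finrank_orthogonal_span_unit hF he
  have hsub : closedBall 0 r ⊆ (ℝ ∙ e)ᗮ.orthogonalProjectionOnto '' sphere (0 : F) r :=
    fun z hz => ⟨hemisphereGraph r e z,
      hemisphereGraph_mem_sphere he hr (mem_closedBall_zero_iff.1 hz),
      orthogonalProjectionOnto_hemisphereGraph r e z⟩
  calc ENNReal.ofReal (r ^ m) * unitBallHausdorffMeasure m
      = μH[m] (closedBall (0 : (ℝ ∙ e)ᗮ) r) := by
        rw [← hK, hausdorffMeasure_closedBall _ hr]
    _ ≤ μH[m] (sphere (0 : F) r) :=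
        (measure_mono hsub).trans
          (hausdorffMeasure_orthogonalProjectionOnto_le _ _ _ m.cast_nonneg)

lemma hausdorffMeasure_sphere_inter_closedBall_exp_le (hF : finrank ℝ F = m + 1) (hm : m ≠ 0)
    {r : ℝ} (hr : 0 < r) (y : F) (k : ℕ) :
    μH[m] (sphere (0 : F) r ∩ closedBall y (‖y‖ * Real.exp (-(k + 1)))) ≤
      sphereCapConst m * ENNReal.ofReal (2 * r) ^ m * 2⁻¹ ^ (k + 1) := by
  set t := Real.exp (-(k + 1))
  have ht : t ≤ 2⁻¹ ^ (k + 1) := by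
    simpa [t, neg_add] using Real.exp_neg_le_inv_two_pow (k + 1)
  have ht_half : t ≤ 2⁻¹ := ht.trans (pow_le_of_le_one (by norm_num) (by norm_num) k.succ_ne_zero)
  have hsub : sphere (0 : F) r ∩ closedBall y (‖y‖ * t) ⊆
      sphere (0 : F) r ∩ closedBall y (2 * r * t) := by
    rintro x ⟨hx, hxy⟩
    rw [mem_sphere_zero_iff_norm] at hx
    rw [mem_closedBall_iff_norm'] at hxy
    have hy : ‖y‖ ≤ 2 * r := by
      have := norm_le_norm_add_norm_sub' y x
      nlinarith [norm_nonneg y]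
    refine ⟨mem_sphere_zero_iff_norm.2 hx, mem_closedBall_iff_norm'.2 (hxy.trans ?_)⟩
    gcongr
  calc μH[m] (sphere (0 : F) r ∩ closedBall y (‖y‖ * t))
      ≤ sphereCapConst m * ENNReal.ofReal (2 * r * t) ^ m :=
        (measure_mono hsub).trans
          (hausdorffMeasure_sphere_inter_closedBall_le hF hr (by positivity) y)
    _ ≤ sphereCapConst m * (ENNReal.ofReal (2 * r) ^ m * ENNReal.ofReal t) := by
        rw [ENNReal.ofReal_mul (by positivity), mul_pow]
        gcongr
        exact pow_le_of_le_one zero_le (ENNReal.ofReal_le_one.2 (by linarith)) hm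
    _ ≤ sphereCapConst m * ENNReal.ofReal (2 * r) ^ m * 2⁻¹ ^ (k + 1) := by
        rw [← mul_assoc]
        gcongr
        refine (ENNReal.ofReal_le_ofReal ht).trans_eq ?_
        rw [ENNReal.ofReal_pow (by norm_num), ENNReal.ofReal_inv_of_pos two_pos,
          ENNReal.ofReal_ofNat]

noncomputable def logKernelConst (m : ℕ) : ℝ≥0∞ :=
  ENNReal.ofReal (Real.log 3) + 1 + sphereCapConst m * 2 ^ m / unitBallHausdorffMeasure m

lemma logKernelConst_ne_top (m : ℕ) : logKernelConst m ≠ ∞ := by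
  have := sphereCapConst_lt_top m
  have := (unitBallHausdorffMeasure_pos m).ne'
  unfold logKernelConst
  finiteness

lemma lintegral_sphere_abs_log_le (hF : finrank ℝ F = m + 1) (hm : m ≠ 0) {r : ℝ} (hr : 0 < r)
    {y : F} (hy : r / 2 ≤ ‖y‖) :
    ∫⁻ x in sphere (0 : F) r, ENNReal.ofReal |Real.log (‖y‖ / ‖x - y‖)| ∂μH[m] ≤
      logKernelConst m * μH[m] (sphere (0 : F) r) := by
  set S := sphere (0 : F) r
  set M := μH[m] S
  set β := unitBallHausdorffMeasure m
  have hβ0 : β ≠ 0 := (unitBallHausdorffMeasure_pos m).ne'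
  have hβtop : β ≠ ∞ := (unitBallHausdorffMeasure_lt_top m).ne
  have hshells : sphereCapConst m * ENNReal.ofReal (2 * r) ^ m ≤
      sphereCapConst m * 2 ^ m / β * M := calc
    sphereCapConst m * ENNReal.ofReal (2 * r) ^ m =
        sphereCapConst m * 2 ^ m / β * (ENNReal.ofReal (r ^ m) * β) := by
      rw [mul_comm (ENNReal.ofReal _) β, ← mul_assoc, ENNReal.div_mul_cancel hβ0 hβtop,
        ENNReal.ofReal_mul zero_le_two, mul_pow, ENNReal.ofReal_pow hr.le, ENNReal.ofReal_ofNat,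
        mul_assoc]
    _ ≤ sphereCapConst m * 2 ^ m / β * M := by
      gcongr
      exact le_hausdorffMeasure_sphere hF hr.le
  have hy0 : 0 < ‖y‖ := by linarith
  calc ∫⁻ x in S, ENNReal.ofReal |Real.log (‖y‖ / ‖x - y‖)| ∂μH[m]
      ≤ ∫⁻ x in S, ENNReal.ofReal (Real.log 3) + ENNReal.ofReal (Real.log (‖y‖ / dist x y))
          ∂μH[m] := by
        refine setLIntegral_mono' isClosed_sphere.measurableSet fun x hx => ?_
        rw [dist_eq_norm]
        refine ofReal_abs_log_div_le hy0 (norm_nonneg _) ?_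
        have := norm_sub_le x y
        rw [mem_sphere_zero_iff_norm.1 hx] at this
        linarith
    _ = ENNReal.ofReal (Real.log 3) * M +
          ∫⁻ x in S, ENNReal.ofReal (Real.log (‖y‖ / dist x y)) ∂μH[m] := by
        rw [lintegral_add_left measurable_const, setLIntegral_const]
    _ ≤ ENNReal.ofReal (Real.log 3) * M + (M + sphereCapConst m * ENNReal.ofReal (2 * r) ^ m) := by
        gcongr
        refine (lintegral_log_div_dist_le _ y (norm_nonneg y) _ fun k => ?_).trans_eq
          (by rw [Measure.restrict_apply_univ])
        rw [Measure.restrict_apply measurableSet_closedBall, Set.inter_comm]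
        exact hausdorffMeasure_sphere_inter_closedBall_exp_le hF hm hr y k
    _ ≤ logKernelConst m * M := by
        rw [logKernelConst]
        calc _ ≤ ENNReal.ofReal (Real.log 3) * M + (M + sphereCapConst m * 2 ^ m / β * M) := by
              gcongr
          _ = _ := by ring

end SphereMeasure

/-- The kernel estimate in the proof of Proposition 3.1 (ii): for `n ≥ 3` there is
`C = C(n) > 0` so that for all `r > 0` and `y` with `|y| ≥ r/2`,
`⨍_{∂B_r(0)} |log(|y|/|x−y|)| dH^{n−1}(x) ≤ C`. -/
theorem sphere_average_log_kernel_bound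
    (n : ℕ) (hn : 3 ≤ n) :
    ∃ C : ℝ, 0 < C ∧ ∀ r : ℝ, 0 < r → ∀ y : EuclideanSpace ℝ (Fin n), r / 2 ≤ ‖y‖ →
      (μH[(n : ℝ) - 1] (Metric.sphere (0 : EuclideanSpace ℝ (Fin n)) r)).toReal⁻¹ *
        ∫ x in Metric.sphere (0 : EuclideanSpace ℝ (Fin n)) r,
          |Real.log (‖y‖ / ‖x - y‖)| ∂μH[(n : ℝ) - 1] ≤ C := by
  obtain ⟨m, rfl⟩ : ∃ m, n = m + 1 := ⟨n - 1, by omega⟩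
  have hC0 : logKernelConst m ≠ 0 := by simp [logKernelConst]
  refine ⟨(logKernelConst m).toReal, ENNReal.toReal_pos hC0 (logKernelConst_ne_top m),
    fun r hr y hy => ?_⟩
  rw [Nat.cast_succ, add_sub_cancel_right]
  exact toReal_inv_mul_setIntegral_le (fun x => abs_nonneg _) (logKernelConst_ne_top m)
    (lintegral_sphere_abs_log_le finrank_euclideanSpace_fin (by omega) hr hy)
end
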